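/- arXiv:1202.3338 — 6 statements merged into one kernel-verified Lean document; each statement's English description precedes it below -/
import Mathlib

section
/- Let C be a linear code over a finite field F_q whose Tanner graph is a single cycle v_1, c_1, v_2, c_2, ..., v_k, c_k, v_1 (each variable node has degree 2, each check node has degree 2), with nonzero labels on the edges. Then C is not reduced to the zero codeword if and only if the product over the cycle (the product of edge labels, where check-to-variable edges contribute with exponent +1 and variable-to-check edges with exponent -1) equals 1. -/
open Finset BigOperators
open Fin.NatCast

lemma cycle_aux_shift {F : Type*} [Field F] (K : ℕ) (c : Fin (K + 1) → F)
    (w : Fin (K + 1) → F) (hrec : ∀ i, w (i + 1) = c i * w i) :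
    ∀ (n : ℕ) (j : Fin (K + 1)),
      w (j + (n : Fin (K + 1))) = (∏ m ∈ Finset.range n, c (j + (m : Fin (K + 1)))) * w j := by
  intro n
  induction n with
  | zero => intro j; simp
  | succ n ih =>
    intro j
    have : (((n : ℕ) + 1 : ℕ) : Fin (K + 1)) = (n : Fin (K + 1)) + 1 := by push_cast; ring
    rw [this, ← add_assoc, hrec (j + (n : Fin (K + 1))), ih j,
      Finset.prod_range_succ]
    ring

/-- **Cycle code proposition (existence part).**
Let `C` be the linear code over a finite field `F` of characteristic 2 (`F = F_q`,
`q = 2^m`) whose Tanner graph is a single cycle `v_1, c_1, v_2, c_2, …, v_k, c_k, v_1`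
of length `k = K+1 ≥ 1`: check `i` involves variables `i` and `i+1` (cyclically), with
nonzero labels `a i` on the check-to-variable edge `(c_i, v_i)` and `b i` on the
variable-to-check edge `(v_{i+1}, c_i)`.  The code is not reduced to the zero codeword
iff the product over the cycle `∏ i, (a i) * (b i)⁻¹` (labels taken with exponent `+1`
on check-to-variable edges and `-1` on variable-to-check edges) equals `1`. -/
theorem cycle_code_nontrivial_iff_prod_one
    {F : Type*} [Field F] [Fintype F] [CharP F 2]
    (K : ℕ) (a b : Fin (K + 1) → F)
    (ha : ∀ i, a i ≠ 0) (hb : ∀ i, b i ≠ 0) :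
    (∃ w : Fin (K + 1) → F, w ≠ 0 ∧ ∀ i, a i * w i + b i * w (i + 1) = 0) ↔
      ∏ i, a i * (b i)⁻¹ = 1 := by
  set c : Fin (K + 1) → F := fun i => a i * (b i)⁻¹ with hc
  have hcne : ∀ i, c i ≠ 0 := fun i => mul_ne_zero (ha i) (inv_ne_zero (hb i))
  have key : ∀ (w : Fin (K + 1) → F) (i : Fin (K + 1)),
      (a i * w i + b i * w (i + 1) = 0) ↔ w (i + 1) = c i * w i := by
    intro w i
    rw [CharTwo.add_eq_iff_eq_add, zero_add, hc]
    have hbi := hb i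
    constructor
    · intro h
      field_simp
      linear_combination -h
    · intro h
      rw [h]
      field_simp
  constructor
  · rintro ⟨w, hw0, hw⟩
    have hrec : ∀ i, w (i + 1) = c i * w i := fun i => (key w i).mp (hw i)
    obtain ⟨j, hj⟩ := Function.ne_iff.mp hw0
    have hshift := cycle_aux_shift K c w hrec (K + 1) j
    rw [Fin.natCast_self, add_zero] at hshift
    have hprod : ∏ m ∈ Finset.range (K + 1), c (j + (m : Fin (K + 1))) = ∏ i, c i := by
      rw [← Fin.prod_univ_eq_prod_range (fun m => c (j + (m : Fin (K + 1)))) (K + 1)]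
      simp_rw [Fin.cast_val_eq_self]
      exact Equiv.prod_comp (Equiv.addLeft j) c
    rw [hprod] at hshift
    have : (∏ i, c i - 1) * w j = 0 := by linear_combination -hshift
    rcases mul_eq_zero.mp this with h | h
    · exact sub_eq_zero.mp h
    · exact absurd h hj
  · intro hprod
    set f : ℕ → F := fun n => ∏ m ∈ Finset.range n, c (m : Fin (K + 1)) with hf
    refine ⟨fun i => f i.val, ?_, ?_⟩
    · intro h
      have := congrFun h 0
      simp [hf] at this
    · intro i
      refine (key (fun i => f i.val) i).mpr ?_
      show f ((i + 1 : Fin (K + 1)) : ℕ) = c i * f (i : ℕ)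
      have hall : f (K + 1) = 1 := by
        show ∏ m ∈ Finset.range (K + 1), c ((m : ℕ) : Fin (K + 1)) = 1
        rw [← Fin.prod_univ_eq_prod_range (fun m => c ((m : ℕ) : Fin (K + 1))) (K + 1)]
        simp_rw [Fin.cast_val_eq_self]
        exact hprod
      rcases eq_or_lt_of_le (Nat.lt_succ_iff.mp i.isLt) with heq | hlt
      · -- i = last
        have hi1 : i + 1 = 0 := by
          apply Fin.ext
          rw [Fin.add_def]
          simp [← heq]
        have hci : c i * f i.val = f (K + 1) := by
          rw [hf]
          simp only
          have hKi : ((K : ℕ) : Fin (K + 1)) = i := by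
            apply Fin.ext
            rw [Fin.val_natCast, Nat.mod_eq_of_lt (Nat.lt_succ_self K)]
            exact heq.symm
          rw [Finset.prod_range_succ, heq, hKi]
          ring
        rw [hi1, hci, hall]
        simp [hf]
      · have hv : ((i + 1 : Fin (K + 1)) : ℕ) = (i : ℕ) + 1 := by
          apply Fin.val_add_one_of_lt
          rwa [Fin.lt_iff_val_lt_val, Fin.val_last]
        rw [hv, hf]
        simp only
        rw [Finset.prod_range_succ, Fin.cast_val_eq_self]
        ring
end

section
/- Let C_X^{(q)} be the q-ary code (q = 2^m) obtained from the toric code Tanner graph G_X by labelling the edges with nonzero elements of F_q such that the product over every cycle of G_X equals 1. Then the F_q-dimension of C_X^{(q)} is exactly n² + 1. -/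
open Matrix Module Finset BigOperators

set_option linter.unusedSectionVars false

/-- Variable nodes of the toric code on the `2n × 2n` torus: pairs `(i,j)` with
`i + j` even. -/
abbrev TorusV (n : ℕ) := {p : ZMod (2*n) × ZMod (2*n) // (p.1.val + p.2.val) % 2 = 0}

/-- `X`-check nodes: pairs `(i,j)` with `i` odd and `j` even. -/
abbrev TorusCX (n : ℕ) := {p : ZMod (2*n) × ZMod (2*n) // p.1.val % 2 = 1 ∧ p.2.val % 2 = 0}

/-- `Z`-check nodes: pairs `(i,j)` with `i` even and `j` odd. -/
abbrev TorusCZ (n : ℕ) := {p : ZMod (2*n) × ZMod (2*n) // p.1.val % 2 = 0 ∧ p.2.val % 2 = 1}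

/-- Adjacency on the torus: a check at `(i,j)` is connected to the four variable
nodes at distance 1, i.e. `(i ± 1, j)` and `(i, j ± 1)` (arithmetic mod `2n`). -/
abbrev torusAdj {n : ℕ} (c v : ZMod (2*n) × ZMod (2*n)) : Prop :=
  (v.1 = c.1 + 1 ∧ v.2 = c.2) ∨ (v.1 = c.1 - 1 ∧ v.2 = c.2) ∨
  (v.1 = c.1 ∧ v.2 = c.2 + 1) ∨ (v.1 = c.1 ∧ v.2 = c.2 - 1)

/-- The product over every cycle of the Tanner graph of `H` equals `1`.  A cycle is a
cyclic alternating sequence `v_0, c_0, v_1, c_1, …, v_{k-1}, c_{k-1}` (`k ≥ 2`) of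
distinct variable nodes and distinct check nodes, where check `c i` is adjacent to
`v i` and `v (i+1)`; the product over the cycle takes each label with exponent `+1`
on check-to-variable edges and `-1` on variable-to-check edges. -/
def CycleProdOne {F C V : Type*} [Field F] (H : Matrix C V F) : Prop :=
  ∀ (k : ℕ) (v : Fin (k + 2) → V) (c : Fin (k + 2) → C),
    Function.Injective v → Function.Injective c →
    (∀ i, H (c i) (v i) ≠ 0) → (∀ i, H (c i) (v (i + 1)) ≠ 0) →
    ∏ i, H (c i) (v (i + 1)) * (H (c i) (v i))⁻¹ = 1

/-- The dual code `C^⊥` of a linear code `C ⊆ R^ι` with respect to the standard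
inner product `⟨x, y⟩ = ∑ i, x i * y i`. -/
def dualCode {R ι : Type*} [CommRing R] [Fintype ι] (C : Submodule R (ι → R)) :
    Submodule R (ι → R) where
  carrier := {y | ∀ x ∈ C, ∑ i, x i * y i = 0}
  add_mem' := by
    intro a b ha hb x hx
    simp only [Pi.add_apply, mul_add, Finset.sum_add_distrib]
    rw [ha x hx, hb x hx, add_zero]
  zero_mem' := by intro x hx; simp
  smul_mem' := by
    intro c y hy x hx
    have : ∑ i, x i * (c • y) i = c * ∑ i, x i * y i := by
      rw [Finset.mul_sum]; apply Finset.sum_congr rfl; intro i _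
      simp only [Pi.smul_apply, smul_eq_mul]; ring
    rw [this, hy x hx, mul_zero]

namespace Toric
variable {n : ℕ} [NeZero (2*n)]

lemma npos : 0 < n := by have := NeZero.pos (2*n); omega

lemma mod_odd (a : ℕ) : (2*a+1) % (2*n) = 2*(a%n)+1 := by
  have h : 2*a+1 = (2*(a%n)+1) + (2*n)*(a/n) := by
    conv_lhs => rw [← Nat.div_add_mod a n]
    ring
  rw [h, Nat.add_mul_mod_self_left]
  exact Nat.mod_eq_of_lt (by have := Nat.mod_lt a (npos (n := n)); omega)

lemma mod_even (a : ℕ) : (2*a) % (2*n) = 2*(a%n) := by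
  have h : 2*a = (2*(a%n)) + (2*n)*(a/n) := by
    conv_lhs => rw [← Nat.div_add_mod a n]
    ring
  rw [h, Nat.add_mul_mod_self_left]
  exact Nat.mod_eq_of_lt (by have := Nat.mod_lt a (npos (n := n)); omega)

lemma val_odd (a : ℕ) : ((2*a+1 : ℕ) : ZMod (2*n)).val = 2*(a%n)+1 := by
  rw [ZMod.val_natCast, mod_odd]

lemma val_even (a : ℕ) : ((2*a : ℕ) : ZMod (2*n)).val = 2*(a%n) := by
  rw [ZMod.val_natCast, mod_even]

/-- check node at `(2a+1, 2b)` -/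
def chk (a b : ℕ) : TorusCX n :=
  ⟨(((2*a+1 : ℕ) : ZMod (2*n)), ((2*b : ℕ) : ZMod (2*n))), by
    constructor
    · rw [val_odd]; omega
    · rw [val_even]; omega⟩

/-- variable node at `(2a, 2b)` -/
def vtxE (a b : ℕ) : TorusV n :=
  ⟨(((2*a : ℕ) : ZMod (2*n)), ((2*b : ℕ) : ZMod (2*n))), by rw [val_even, val_even]; omega⟩

/-- variable node at `(2a+1, 2b+1)` -/
def vtxV (a b : ℕ) : TorusV n :=
  ⟨(((2*a+1 : ℕ) : ZMod (2*n)), ((2*b+1 : ℕ) : ZMod (2*n))), by rw [val_odd, val_odd]; omega⟩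

lemma natCast_eq_iff (x y : ℕ) : ((x : ℕ) : ZMod (2*n)) = y ↔ x % (2*n) = y % (2*n) := by
  rw [ZMod.natCast_eq_natCast_iff]; rfl

lemma chk_eq_iff (a b a' b' : ℕ) :
    (chk a b : TorusCX n) = chk a' b' ↔ (a % n = a' % n ∧ b % n = b' % n) := by
  rw [Subtype.ext_iff, Prod.ext_iff]
  simp only [chk, natCast_eq_iff, mod_odd, mod_even]
  omega

lemma vtxE_eq_iff (a b a' b' : ℕ) :
    (vtxE a b : TorusV n) = vtxE a' b' ↔ (a % n = a' % n ∧ b % n = b' % n) := by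
  rw [Subtype.ext_iff, Prod.ext_iff]
  simp only [vtxE, natCast_eq_iff, mod_even]
  omega

lemma vtxV_eq_iff (a b a' b' : ℕ) :
    (vtxV a b : TorusV n) = vtxV a' b' ↔ (a % n = a' % n ∧ b % n = b' % n) := by
  rw [Subtype.ext_iff, Prod.ext_iff]
  simp only [vtxV, natCast_eq_iff, mod_odd]
  omega

lemma vtxE_ne_vtxV (a b a' b' : ℕ) : (vtxE a b : TorusV n) ≠ vtxV a' b' := by
  intro h
  have h1 : ((2*a : ℕ) : ZMod (2*n)) = ((2*a'+1 : ℕ) : ZMod (2*n)) :=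
    congrArg (fun v : TorusV n => v.1.1) h
  have h2 := congrArg ZMod.val h1
  rw [val_even, val_odd] at h2; omega

lemma chk_rep (p : TorusCX n) : p = chk (p.1.1.val / 2) (p.1.2.val / 2) := by
  have hx := p.2.1; have hy := p.2.2
  apply Subtype.ext; apply Prod.ext
  · show p.1.1 = ((2 * (p.1.1.val / 2) + 1 : ℕ) : ZMod (2*n))
    have h : 2 * (p.1.1.val / 2) + 1 = p.1.1.val := by omega
    rw [h, ZMod.natCast_val, ZMod.cast_id]
  · show p.1.2 = ((2 * (p.1.2.val / 2) : ℕ) : ZMod (2*n))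
    have h : 2 * (p.1.2.val / 2) = p.1.2.val := by omega
    rw [h, ZMod.natCast_val, ZMod.cast_id]

lemma var_rep (v : TorusV n) :
    (∃ a b, v = vtxE a b) ∨ (∃ a b, v = vtxV a b) := by
  have hxy := v.2
  rcases Nat.even_or_odd v.1.1.val with hx | hx
  · left
    refine ⟨v.1.1.val / 2, v.1.2.val / 2, ?_⟩
    obtain ⟨k, hk⟩ := hx
    apply Subtype.ext; apply Prod.ext
    · show v.1.1 = ((2 * (v.1.1.val / 2) : ℕ) : ZMod (2*n))
      have h : 2 * (v.1.1.val / 2) = v.1.1.val := by omega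
      rw [h, ZMod.natCast_val, ZMod.cast_id]
    · show v.1.2 = ((2 * (v.1.2.val / 2) : ℕ) : ZMod (2*n))
      have h : 2 * (v.1.2.val / 2) = v.1.2.val := by omega
      rw [h, ZMod.natCast_val, ZMod.cast_id]
  · right
    refine ⟨v.1.1.val / 2, v.1.2.val / 2, ?_⟩
    obtain ⟨k, hk⟩ := hx
    apply Subtype.ext; apply Prod.ext
    · show v.1.1 = ((2 * (v.1.1.val / 2) + 1 : ℕ) : ZMod (2*n))
      have h : 2 * (v.1.1.val / 2) + 1 = v.1.1.val := by omega
      rw [h, ZMod.natCast_val, ZMod.cast_id]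
    · show v.1.2 = ((2 * (v.1.2.val / 2) + 1 : ℕ) : ZMod (2*n))
      have h : 2 * (v.1.2.val / 2) + 1 = v.1.2.val := by omega
      rw [h, ZMod.natCast_val, ZMod.cast_id]

/-! ### Counting -/

def eCX : TorusCX n ≃ Fin n × Fin n where
  toFun p := (⟨p.1.1.val / 2, by have := ZMod.val_lt p.1.1; omega⟩,
              ⟨p.1.2.val / 2, by have := ZMod.val_lt p.1.2; omega⟩)
  invFun x := chk x.1 x.2
  left_inv p := (chk_rep p).symm
  right_inv := by
    rintro ⟨⟨a, ha⟩, ⟨b, hb⟩⟩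
    have h1 : (chk a b : TorusCX n).1.1.val = 2*(a%n)+1 := val_odd a
    have h2 : (chk a b : TorusCX n).1.2.val = 2*(b%n) := val_even b
    have ha' : a % n = a := Nat.mod_eq_of_lt ha
    have hb' : b % n = b := Nat.mod_eq_of_lt hb
    simp only [Prod.mk.injEq, Fin.mk.injEq]
    constructor <;> [rw [h1] ; rw [h2]] <;> omega

def eV : TorusV n ≃ (Fin n × Fin n) ⊕ (Fin n × Fin n) where
  toFun p :=
    if h : p.1.1.val % 2 = 0 then
      Sum.inl (⟨p.1.1.val / 2, by have := ZMod.val_lt p.1.1; omega⟩,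
               ⟨p.1.2.val / 2, by have := ZMod.val_lt p.1.2; omega⟩)
    else
      Sum.inr (⟨p.1.1.val / 2, by have := ZMod.val_lt p.1.1; omega⟩,
               ⟨p.1.2.val / 2, by have := ZMod.val_lt p.1.2; omega⟩)
  invFun := Sum.elim (fun x => vtxE x.1 x.2) (fun x => vtxV x.1 x.2)
  left_inv := by
    intro p
    have hp := p.2
    dsimp only
    by_cases h : p.1.1.val % 2 = 0
    · rw [dif_pos h]
      show vtxE (p.1.1.val / 2) (p.1.2.val / 2) = p
      symm
      apply Subtype.ext; apply Prod.ext
      · show p.1.1 = ((2 * (p.1.1.val / 2) : ℕ) : ZMod (2*n))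
        have hh : 2 * (p.1.1.val / 2) = p.1.1.val := by omega
        rw [hh, ZMod.natCast_val, ZMod.cast_id]
      · show p.1.2 = ((2 * (p.1.2.val / 2) : ℕ) : ZMod (2*n))
        have hh : 2 * (p.1.2.val / 2) = p.1.2.val := by omega
        rw [hh, ZMod.natCast_val, ZMod.cast_id]
    · rw [dif_neg h]
      show vtxV (p.1.1.val / 2) (p.1.2.val / 2) = p
      symm
      apply Subtype.ext; apply Prod.ext
      · show p.1.1 = ((2 * (p.1.1.val / 2) + 1 : ℕ) : ZMod (2*n))
        have hh : 2 * (p.1.1.val / 2) + 1 = p.1.1.val := by omega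
        rw [hh, ZMod.natCast_val, ZMod.cast_id]
      · show p.1.2 = ((2 * (p.1.2.val / 2) + 1 : ℕ) : ZMod (2*n))
        have hh : 2 * (p.1.2.val / 2) + 1 = p.1.2.val := by omega
        rw [hh, ZMod.natCast_val, ZMod.cast_id]
  right_inv := by
    rintro (⟨⟨a, ha⟩, ⟨b, hb⟩⟩ | ⟨⟨a, ha⟩, ⟨b, hb⟩⟩)
    · dsimp only [Sum.elim_inl]
      have h1 : (vtxE a b : TorusV n).1.1.val = 2*(a%n) := val_even a
      have h2 : (vtxE a b : TorusV n).1.2.val = 2*(b%n) := val_even b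
      rw [dif_pos (by omega)]
      have ha' : a % n = a := Nat.mod_eq_of_lt ha
      have hb' : b % n = b := Nat.mod_eq_of_lt hb
      simp only [Sum.inl.injEq, Prod.mk.injEq, Fin.mk.injEq]
      constructor <;> [rw [h1] ; rw [h2]] <;> omega
    · dsimp only [Sum.elim_inr]
      have h1 : (vtxV a b : TorusV n).1.1.val = 2*(a%n)+1 := val_odd a
      have h2 : (vtxV a b : TorusV n).1.2.val = 2*(b%n)+1 := val_odd b
      rw [dif_neg (by omega)]
      have ha' : a % n = a := Nat.mod_eq_of_lt ha
      have hb' : b % n = b := Nat.mod_eq_of_lt hb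
      simp only [Sum.inr.injEq, Prod.mk.injEq, Fin.mk.injEq]
      constructor <;> [rw [h1] ; rw [h2]] <;> omega

lemma card_CX : Fintype.card (TorusCX n) = n^2 := by
  rw [Fintype.card_congr (eCX (n := n))]
  simp [pow_two]

lemma card_V : Fintype.card (TorusV n) = 2*n^2 := by
  rw [Fintype.card_congr (eV (n := n))]
  simp [pow_two]; ring

/-! ### Parity homomorphism -/

def par : ZMod (2*n) →+* ZMod 2 := ZMod.castHom ⟨n, rfl⟩ (ZMod 2)

lemma par_apply (x : ZMod (2*n)) : par x = ((x.val : ℕ) : ZMod 2) := by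
  rw [par, ZMod.castHom_apply]
  exact (ZMod.natCast_val x).symm

lemma par_even {x : ZMod (2*n)} (h : x.val % 2 = 0) : par x = 0 := by
  rw [par_apply, ← ZMod.natCast_mod, h, Nat.cast_zero]

lemma par_odd {x : ZMod (2*n)} (h : x.val % 2 = 1) : par x = 1 := by
  rw [par_apply, ← ZMod.natCast_mod, h, Nat.cast_one]

lemma par_even_cast (b : ℕ) : par (((2*b : ℕ) : ZMod (2*n))) = 0 := by
  rw [map_natCast, ← ZMod.natCast_mod, Nat.mul_mod_right, Nat.cast_zero]

lemma par_odd_cast (b : ℕ) : par (((2*b+1 : ℕ) : ZMod (2*n))) = 1 := by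
  rw [map_natCast, ← ZMod.natCast_mod]
  rw [show (2*b+1) % 2 = 1 by omega, Nat.cast_one]

/-! ### Adjacency facts -/

section withMatrix
variable {m : ℕ} (HX : Matrix (TorusCX n) (TorusV n) (GaloisField 2 m))
variable (hX : ∀ c v, HX c v ≠ 0 ↔ torusAdj c.1 v.1)

include hX

lemma hE0 (a b : ℕ) : HX (chk a b) (vtxE a b) ≠ 0 := by
  rw [hX]
  right; left
  constructor
  · show ((2*a : ℕ) : ZMod (2*n)) = ((2*a+1 : ℕ) : ZMod (2*n)) - 1
    push_cast; ring
  · rfl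

lemma hE1 (a b : ℕ) : HX (chk a b) (vtxE (a+1) b) ≠ 0 := by
  rw [hX]
  left
  constructor
  · show ((2*(a+1) : ℕ) : ZMod (2*n)) = ((2*a+1 : ℕ) : ZMod (2*n)) + 1
    push_cast; ring
  · rfl

lemma hE2 (a b : ℕ) : HX (chk (a+1) b) (vtxE (a+1) b) ≠ 0 := by
  rw [hX]
  right; left
  constructor
  · show ((2*(a+1) : ℕ) : ZMod (2*n)) = ((2*(a+1)+1 : ℕ) : ZMod (2*n)) - 1
    push_cast; ring
  · rfl

lemma hV1 (a b : ℕ) : HX (chk a b) (vtxV a b) ≠ 0 := by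
  rw [hX]
  right; right; left
  constructor
  · rfl
  · show ((2*b+1 : ℕ) : ZMod (2*n)) = ((2*b : ℕ) : ZMod (2*n)) + 1
    push_cast; ring

lemma hV2 (a b : ℕ) : HX (chk a (b+1)) (vtxV a b) ≠ 0 := by
  rw [hX]
  right; right; right
  constructor
  · rfl
  · show ((2*b+1 : ℕ) : ZMod (2*n)) = ((2*(b+1) : ℕ) : ZMod (2*n)) - 1
    push_cast; ring

lemma classE (a b : ℕ) (p : TorusCX n) (h : HX p (vtxE (a+1) b) ≠ 0) :
    p = chk a b ∨ p = chk (a+1) b := by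
  have hadj := (hX p (vtxE (a+1) b)).1 h
  have hp1 := p.2.1
  have hp2 := p.2.2
  rcases hadj with ⟨h1, h2⟩ | ⟨h1, h2⟩ | ⟨h1, h2⟩ | ⟨h1, h2⟩
  · left
    have h1' : ((2*(a+1) : ℕ) : ZMod (2*n)) = p.1.1 + 1 := h1
    have h2' : ((2*b : ℕ) : ZMod (2*n)) = p.1.2 := h2
    apply Subtype.ext; apply Prod.ext
    · show p.1.1 = ((2*a+1 : ℕ) : ZMod (2*n))
      have : p.1.1 = ((2*(a+1) : ℕ) : ZMod (2*n)) - 1 := by rw [h1']; ring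
      rw [this]; push_cast; ring
    · exact h2'.symm
  · right
    have h1' : ((2*(a+1) : ℕ) : ZMod (2*n)) = p.1.1 - 1 := h1
    have h2' : ((2*b : ℕ) : ZMod (2*n)) = p.1.2 := h2
    apply Subtype.ext; apply Prod.ext
    · show p.1.1 = ((2*(a+1)+1 : ℕ) : ZMod (2*n))
      have : p.1.1 = ((2*(a+1) : ℕ) : ZMod (2*n)) + 1 := by rw [h1']; ring
      rw [this]; push_cast; ring
    · exact h2'.symm
  · exfalso
    have h2' : ((2*b : ℕ) : ZMod (2*n)) = p.1.2 + 1 := h2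
    have hpar := congrArg (par (n := n)) h2'
    rw [par_even_cast, map_add, par_even hp2, _root_.map_one] at hpar
    exact absurd hpar (by decide)
  · exfalso
    have h2' : ((2*b : ℕ) : ZMod (2*n)) = p.1.2 - 1 := h2
    have hh : p.1.2 = ((2*b : ℕ) : ZMod (2*n)) + 1 := by rw [h2']; ring
    have hpar := congrArg (par (n := n)) hh
    rw [par_even hp2, map_add, par_even_cast, _root_.map_one] at hpar
    exact absurd hpar (by decide)

lemma classV (a b : ℕ) (p : TorusCX n) (h : HX p (vtxV a b) ≠ 0) :
    p = chk a b ∨ p = chk a (b+1) := by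
  have hadj := (hX p (vtxV a b)).1 h
  have hp1 := p.2.1
  have hp2 := p.2.2
  rcases hadj with ⟨h1, h2⟩ | ⟨h1, h2⟩ | ⟨h1, h2⟩ | ⟨h1, h2⟩
  · exfalso
    have h1' : ((2*a+1 : ℕ) : ZMod (2*n)) = p.1.1 + 1 := h1
    have hpar := congrArg (par (n := n)) h1'
    rw [par_odd_cast, map_add, par_odd hp1, _root_.map_one] at hpar
    exact absurd hpar (by decide)
  · exfalso
    have h1' : ((2*a+1 : ℕ) : ZMod (2*n)) = p.1.1 - 1 := h1
    have hh : p.1.1 = ((2*a+1 : ℕ) : ZMod (2*n)) + 1 := by rw [h1']; ring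
    have hpar := congrArg (par (n := n)) hh
    rw [par_odd hp1, map_add, par_odd_cast, _root_.map_one] at hpar
    exact absurd hpar (by decide)
  · left
    have h1' : ((2*a+1 : ℕ) : ZMod (2*n)) = p.1.1 := h1
    have h2' : ((2*b+1 : ℕ) : ZMod (2*n)) = p.1.2 + 1 := h2
    apply Subtype.ext; apply Prod.ext
    · exact h1'.symm
    · show p.1.2 = ((2*b : ℕ) : ZMod (2*n))
      have : p.1.2 = ((2*b+1 : ℕ) : ZMod (2*n)) - 1 := by rw [h2']; ring
      rw [this]; push_cast; ring
  · right
    have h1' : ((2*a+1 : ℕ) : ZMod (2*n)) = p.1.1 := h1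
    have h2' : ((2*b+1 : ℕ) : ZMod (2*n)) = p.1.2 - 1 := h2
    apply Subtype.ext; apply Prod.ext
    · exact h1'.symm
    · show p.1.2 = ((2*(b+1) : ℕ) : ZMod (2*n))
      have : p.1.2 = ((2*b+1 : ℕ) : ZMod (2*n)) + 1 := by rw [h2']; ring
      rw [this]; push_cast; ring

end withMatrix
/-! ### Edge ratios and cycle relations -/

section ratios
variable {m : ℕ} (HX : Matrix (TorusCX n) (TorusV n) (GaloisField 2 m))
variable (hX : ∀ c v, HX c v ≠ 0 ↔ torusAdj c.1 v.1)
variable (hcyc : CycleProdOne HX)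

lemma mod_succ_ne (hn : 2 ≤ n) (a : ℕ) : a % n ≠ (a+1) % n := by
  intro h
  have h2 : a ≡ a + 1 [MOD n] := h
  have h3 := (Nat.modEq_iff_dvd' (Nat.le_succ a)).1 h2
  simp at h3
  omega

lemma chk_ne_succA (hn : 2 ≤ n) (a b : ℕ) : (chk a b : TorusCX n) ≠ chk (a+1) b := by
  rw [Ne, chk_eq_iff]
  rintro ⟨h, -⟩
  exact mod_succ_ne hn a h

lemma chk_ne_succB (hn : 2 ≤ n) (a b : ℕ) : (chk a b : TorusCX n) ≠ chk a (b+1) := by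
  rw [Ne, chk_eq_iff]
  rintro ⟨-, h⟩
  exact mod_succ_ne hn b h

/-- The horizontal edge ratio between `chk a b` and `chk (a+1) b`. -/
noncomputable def rr (a b : ℕ) : GaloisField 2 m :=
  HX (chk a b) (vtxE (a+1) b) * (HX (chk (a+1) b) (vtxE (a+1) b))⁻¹

/-- The vertical edge ratio between `chk a b` and `chk a (b+1)`. -/
noncomputable def uu (a b : ℕ) : GaloisField 2 m :=
  HX (chk a b) (vtxV a b) * (HX (chk a (b+1)) (vtxV a b))⁻¹

lemma succ_mod_congr {a a' : ℕ} (h : a % n = a' % n) : (a+1) % n = (a'+1) % n := by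
  rw [Nat.add_mod a 1, Nat.add_mod a' 1, h]

lemma rr_congr {a b a' b' : ℕ} (h1 : a % n = a' % n) (h2 : b % n = b' % n) :
    rr HX a b = rr HX a' b' := by
  unfold rr
  rw [show (chk a b : TorusCX n) = chk a' b' from (chk_eq_iff _ _ _ _).2 ⟨h1, h2⟩,
      show (chk (a+1) b : TorusCX n) = chk (a'+1) b' from
        (chk_eq_iff _ _ _ _).2 ⟨succ_mod_congr h1, h2⟩,
      show (vtxE (a+1) b : TorusV n) = vtxE (a'+1) b' from
        (vtxE_eq_iff _ _ _ _).2 ⟨succ_mod_congr h1, h2⟩]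

lemma uu_congr {a b a' b' : ℕ} (h1 : a % n = a' % n) (h2 : b % n = b' % n) :
    uu HX a b = uu HX a' b' := by
  unfold uu
  rw [show (chk a b : TorusCX n) = chk a' b' from (chk_eq_iff _ _ _ _).2 ⟨h1, h2⟩,
      show (chk a (b+1) : TorusCX n) = chk a' (b'+1) from
        (chk_eq_iff _ _ _ _).2 ⟨h1, succ_mod_congr h2⟩,
      show (vtxV a b : TorusV n) = vtxV a' b' from
        (vtxV_eq_iff _ _ _ _).2 ⟨h1, h2⟩]

include hX

lemma rr_ne (a b : ℕ) : rr HX a b ≠ 0 :=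
  mul_ne_zero (hE1 HX hX a b) (inv_ne_zero (hE2 HX hX a b))

lemma uu_ne (a b : ℕ) : uu HX a b ≠ 0 :=
  mul_ne_zero (hV1 HX hX a b) (inv_ne_zero (hV2 HX hX a b))

lemma sum_red_E (y : TorusCX n → GaloisField 2 m) (hn : 2 ≤ n) (a b : ℕ) :
    ∑ c : TorusCX n, HX c (vtxE (a+1) b) * y c =
      HX (chk a b) (vtxE (a+1) b) * y (chk a b) +
      HX (chk (a+1) b) (vtxE (a+1) b) * y (chk (a+1) b) := by
  classical
  have hz : ∀ x ∈ (Finset.univ : Finset (TorusCX n)),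
      x ∉ ({chk a b, chk (a+1) b} : Finset (TorusCX n)) → HX x (vtxE (a+1) b) * y x = 0 := by
    intro x _ hx
    by_cases h0 : HX x (vtxE (a+1) b) = 0
    · rw [h0, zero_mul]
    · exact absurd (classE HX hX a b x h0) (by rcases (by simpa using hx : _) with ⟨h1, h2⟩; tauto)
  rw [← Finset.sum_subset (Finset.subset_univ _) hz, Finset.sum_pair (chk_ne_succA hn a b)]

lemma sum_red_V (y : TorusCX n → GaloisField 2 m) (hn : 2 ≤ n) (a b : ℕ) :
    ∑ c : TorusCX n, HX c (vtxV a b) * y c =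
      HX (chk a b) (vtxV a b) * y (chk a b) +
      HX (chk a (b+1)) (vtxV a b) * y (chk a (b+1)) := by
  classical
  have hz : ∀ x ∈ (Finset.univ : Finset (TorusCX n)),
      x ∉ ({chk a b, chk a (b+1)} : Finset (TorusCX n)) → HX x (vtxV a b) * y x = 0 := by
    intro x _ hx
    by_cases h0 : HX x (vtxV a b) = 0
    · rw [h0, zero_mul]
    · exact absurd (classV HX hX a b x h0) (by rcases (by simpa using hx : _) with ⟨h1, h2⟩; tauto)
  rw [← Finset.sum_subset (Finset.subset_univ _) hz, Finset.sum_pair (chk_ne_succB hn a b)]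

omit hX in
lemma inj4 {α : Type*} {f : Fin (2+2) → α} (h01 : f 0 ≠ f 1) (h02 : f 0 ≠ f 2)
    (h03 : f 0 ≠ f 3) (h12 : f 1 ≠ f 2) (h13 : f 1 ≠ f 3) (h23 : f 2 ≠ f 3) :
    Function.Injective f := by
  intro i j hij
  apply Fin.ext
  rcases i with ⟨iv, hiv⟩
  rcases j with ⟨jv, hjv⟩
  show iv = jv
  interval_cases iv <;> interval_cases jv <;>
    first
      | rfl
      | exact absurd hij h01 | exact absurd hij.symm h01
      | exact absurd hij h02 | exact absurd hij.symm h02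
      | exact absurd hij h03 | exact absurd hij.symm h03
      | exact absurd hij h12 | exact absurd hij.symm h12
      | exact absurd hij h13 | exact absurd hij.symm h13
      | exact absurd hij h23 | exact absurd hij.symm h23

include hcyc

lemma face (hn : 2 ≤ n) (a b : ℕ) :
    rr HX a b * uu HX (a+1) b = uu HX a b * rr HX a (b+1) := by
  have hA0 : HX (chk a b) (vtxE (a+1) b) ≠ 0 := hE1 HX hX a b
  have hA1 : HX (chk (a+1) b) (vtxE (a+1) b) ≠ 0 := hE2 HX hX a b
  have hB0 : HX (chk (a+1) b) (vtxV (a+1) b) ≠ 0 := hV1 HX hX (a+1) b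
  have hB1 : HX (chk (a+1) (b+1)) (vtxV (a+1) b) ≠ 0 := hV2 HX hX (a+1) b
  have hC0 : HX (chk a b) (vtxV a b) ≠ 0 := hV1 HX hX a b
  have hC1 : HX (chk a (b+1)) (vtxV a b) ≠ 0 := hV2 HX hX a b
  have hD0 : HX (chk a (b+1)) (vtxE (a+1) (b+1)) ≠ 0 := hE1 HX hX a (b+1)
  have hD1 : HX (chk (a+1) (b+1)) (vtxE (a+1) (b+1)) ≠ 0 := hE2 HX hX a (b+1)
  have hvinj : Function.Injective
      (![vtxV a b, vtxE (a+1) b, vtxV (a+1) b, vtxE (a+1) (b+1)] : Fin 4 → TorusV n) := by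
    have n01 : (vtxV a b : TorusV n) ≠ vtxE (a+1) b := (vtxE_ne_vtxV _ _ _ _).symm
    have n02 : (vtxV a b : TorusV n) ≠ vtxV (a+1) b := by
      rw [Ne, vtxV_eq_iff]; rintro ⟨h, -⟩; exact mod_succ_ne hn a h
    have n03 : (vtxV a b : TorusV n) ≠ vtxE (a+1) (b+1) := (vtxE_ne_vtxV _ _ _ _).symm
    have n12 : (vtxE (a+1) b : TorusV n) ≠ vtxV (a+1) b := vtxE_ne_vtxV _ _ _ _
    have n13 : (vtxE (a+1) b : TorusV n) ≠ vtxE (a+1) (b+1) := by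
      rw [Ne, vtxE_eq_iff]; rintro ⟨-, h⟩; exact mod_succ_ne hn b h
    have n23 : (vtxV (a+1) b : TorusV n) ≠ vtxE (a+1) (b+1) := (vtxE_ne_vtxV _ _ _ _).symm
    exact inj4 n01 n02 n03 n12 n13 n23
  have hcinj : Function.Injective
      (![chk a b, chk (a+1) b, chk (a+1) (b+1), chk a (b+1)] : Fin 4 → TorusCX n) := by
    have n01 : (chk a b : TorusCX n) ≠ chk (a+1) b := chk_ne_succA hn a b
    have n02 : (chk a b : TorusCX n) ≠ chk (a+1) (b+1) := by
      rw [Ne, chk_eq_iff]; rintro ⟨h, -⟩; exact mod_succ_ne hn a h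
    have n03 : (chk a b : TorusCX n) ≠ chk a (b+1) := chk_ne_succB hn a b
    have n12 : (chk (a+1) b : TorusCX n) ≠ chk (a+1) (b+1) := chk_ne_succB hn (a+1) b
    have n13 : (chk (a+1) b : TorusCX n) ≠ chk a (b+1) := by
      rw [Ne, chk_eq_iff]; rintro ⟨h, -⟩; exact (mod_succ_ne hn a h.symm)
    have n23 : (chk (a+1) (b+1) : TorusCX n) ≠ chk a (b+1) := by
      rw [Ne, chk_eq_iff]; rintro ⟨h, -⟩; exact (mod_succ_ne hn a h.symm)
    exact inj4 n01 n02 n03 n12 n13 n23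
  have h1 : ∀ i : Fin (2+2),
      HX (![chk a b, chk (a+1) b, chk (a+1) (b+1), chk a (b+1)] i)
         (![vtxV a b, vtxE (a+1) b, vtxV (a+1) b, vtxE (a+1) (b+1)] i) ≠ 0 := by
    intro i
    fin_cases i
    · exact hC0
    · exact hA1
    · exact hB1
    · exact hD0
  have h2 : ∀ i : Fin (2+2),
      HX (![chk a b, chk (a+1) b, chk (a+1) (b+1), chk a (b+1)] i)
         (![vtxV a b, vtxE (a+1) b, vtxV (a+1) b, vtxE (a+1) (b+1)] (i+1)) ≠ 0 := by
    intro i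
    fin_cases i
    · exact hA0
    · exact hB0
    · exact hD1
    · exact hC1
  have E := hcyc 2 _ _ hvinj hcinj h1 h2
  rw [Fin.prod_univ_four] at E
  have E' : (HX (chk a b) (vtxE (a+1) b) * (HX (chk a b) (vtxV a b))⁻¹) *
      (HX (chk (a+1) b) (vtxV (a+1) b) * (HX (chk (a+1) b) (vtxE (a+1) b))⁻¹) *
      (HX (chk (a+1) (b+1)) (vtxE (a+1) (b+1)) * (HX (chk (a+1) (b+1)) (vtxV (a+1) b))⁻¹) *
      (HX (chk a (b+1)) (vtxV a b) * (HX (chk a (b+1)) (vtxE (a+1) (b+1)))⁻¹) = 1 := E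
  unfold rr uu
  field_simp at E' ⊢
  linear_combination E'

lemma rowone (hn : 2 ≤ n) (b : ℕ) : ∏ s ∈ Finset.range n, rr HX s b = 1 := by
  obtain ⟨k, hk⟩ : ∃ k, n = k + 2 := ⟨n - 2, by omega⟩
  have hcast : ∀ i : Fin (k+2), ((i + 1 : Fin (k+2)) : ℕ) % n = (i.val + 1) % n := by
    intro i
    have h5 : (i.val + 1) % (k+2) = (i.val + 1) % n := by rw [hk]
    rw [Fin.val_add, Fin.val_one, h5, Nat.mod_mod_of_dvd _ (dvd_refl n)]
  have hvi : ∀ i : Fin (k+2),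
      (vtxE ((i + 1 : Fin (k+2)) : ℕ) b : TorusV n) = vtxE (i.val + 1) b := by
    intro i
    exact (vtxE_eq_iff _ _ _ _).2 ⟨hcast i, rfl⟩
  have hinjv : Function.Injective (fun i : Fin (k+2) => (vtxE i.val b : TorusV n)) := by
    intro i j hij
    rw [vtxE_eq_iff] at hij
    have hi : i.val < n := hk ▸ i.isLt
    have hj : j.val < n := hk ▸ j.isLt
    have h := hij.1
    rw [Nat.mod_eq_of_lt hi, Nat.mod_eq_of_lt hj] at h
    exact Fin.ext h
  have hinjc : Function.Injective (fun i : Fin (k+2) => (chk i.val b : TorusCX n)) := by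
    intro i j hij
    rw [chk_eq_iff] at hij
    have hi : i.val < n := hk ▸ i.isLt
    have hj : j.val < n := hk ▸ j.isLt
    have h := hij.1
    rw [Nat.mod_eq_of_lt hi, Nat.mod_eq_of_lt hj] at h
    exact Fin.ext h
  have h1 : ∀ i : Fin (k+2), HX (chk i.val b) (vtxE i.val b) ≠ 0 :=
    fun i => hE0 HX hX i.val b
  have h2 : ∀ i : Fin (k+2), HX (chk i.val b) (vtxE ((i + 1 : Fin (k+2)) : ℕ) b) ≠ 0 := by
    intro i
    rw [hvi i]
    exact hE1 HX hX i.val b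
  have E := hcyc k (fun i => vtxE i.val b) (fun i => chk i.val b) hinjv hinjc h1 h2
  have E' : ∏ i : Fin (k+2),
      HX (chk i.val b) (vtxE (i.val+1) b) * (HX (chk i.val b) (vtxE i.val b))⁻¹ = 1 := by
    rw [← E]
    exact Finset.prod_congr rfl fun i _ => by simp only [hvi i]
  have hre : ∏ i : Fin (k+2), HX (chk (i.val+1) b) (vtxE (i.val+1) b)
      = ∏ i : Fin (k+2), HX (chk i.val b) (vtxE i.val b) := by
    apply Fintype.prod_equiv (Equiv.addRight (1 : Fin (k+2)))
    intro i
    show HX (chk (i.val+1) b) (vtxE (i.val+1) b)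
        = HX (chk ((i + 1 : Fin (k+2)) : ℕ) b) (vtxE ((i + 1 : Fin (k+2)) : ℕ) b)
    rw [show (chk ((i + 1 : Fin (k+2)) : ℕ) b : TorusCX n) = chk (i.val+1) b from
          (chk_eq_iff _ _ _ _).2 ⟨hcast i, rfl⟩, hvi i]
  rw [show Finset.range n = Finset.range (k+2) from by rw [hk],
      ← Fin.prod_univ_eq_prod_range (fun s => rr HX s b) (k+2)]
  unfold rr
  rw [Finset.prod_mul_distrib, Finset.prod_inv_distrib, hre]
  rw [Finset.prod_mul_distrib, Finset.prod_inv_distrib] at E'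
  exact E'

lemma colone (hn : 2 ≤ n) (a : ℕ) : ∏ t ∈ Finset.range n, uu HX a t = 1 := by
  obtain ⟨k, hk⟩ : ∃ k, n = k + 2 := ⟨n - 2, by omega⟩
  obtain ⟨d, hd⟩ : ∃ d, n = d + 1 := ⟨n - 1, by omega⟩
  have hcast : ∀ i : Fin (k+2), ((i + 1 : Fin (k+2)) : ℕ) % n = (i.val + 1) % n := by
    intro i
    have h5 : (i.val + 1) % (k+2) = (i.val + 1) % n := by rw [hk]
    rw [Fin.val_add, Fin.val_one, h5, Nat.mod_mod_of_dvd _ (dvd_refl n)]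
  have hvi : ∀ i : Fin (k+2),
      (vtxV a (((i + 1 : Fin (k+2)) : ℕ) + d) : TorusV n) = vtxV a i.val := by
    intro i
    refine (vtxV_eq_iff _ _ _ _).2 ⟨rfl, ?_⟩
    rw [Nat.add_mod ((i + 1 : Fin (k+2)) : ℕ) d, hcast i, ← Nat.add_mod,
        show (i : ℕ) + 1 + d = (i : ℕ) + n from by omega, Nat.add_mod_right]
  have hinjv : Function.Injective (fun i : Fin (k+2) => (vtxV a (i.val + d) : TorusV n)) := by
    intro i j hij
    rw [vtxV_eq_iff] at hij
    have h := hij.2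
    have h2 : i.val % n = j.val % n := by
      have := Nat.ModEq.add_right_cancel' d (h : (i.val + d) ≡ (j.val + d) [MOD n])
      exact this
    have hi : i.val < n := hk ▸ i.isLt
    have hj : j.val < n := hk ▸ j.isLt
    rw [Nat.mod_eq_of_lt hi, Nat.mod_eq_of_lt hj] at h2
    exact Fin.ext h2
  have hinjc : Function.Injective (fun i : Fin (k+2) => (chk a i.val : TorusCX n)) := by
    intro i j hij
    rw [chk_eq_iff] at hij
    have hi : i.val < n := hk ▸ i.isLt
    have hj : j.val < n := hk ▸ j.isLt
    have h := hij.2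
    rw [Nat.mod_eq_of_lt hi, Nat.mod_eq_of_lt hj] at h
    exact Fin.ext h
  have hchk : ∀ i : Fin (k+2), (chk a i.val : TorusCX n) = chk a ((i.val + d) + 1) := by
    intro i
    refine (chk_eq_iff _ _ _ _).2 ⟨rfl, ?_⟩
    rw [show i.val + d + 1 = i.val + n from by omega, Nat.add_mod_right]
  have h1 : ∀ i : Fin (k+2), HX (chk a i.val) (vtxV a (i.val + d)) ≠ 0 := by
    intro i
    rw [hchk i]
    exact hV2 HX hX a (i.val + d)
  have h2 : ∀ i : Fin (k+2), HX (chk a i.val) (vtxV a (((i + 1 : Fin (k+2)) : ℕ) + d)) ≠ 0 := by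
    intro i
    rw [hvi i]
    exact hV1 HX hX a i.val
  have E := hcyc k (fun i => vtxV a (i.val + d)) (fun i => chk a i.val) hinjv hinjc h1 h2
  have E' : ∏ i : Fin (k+2),
      HX (chk a i.val) (vtxV a i.val) * (HX (chk a i.val) (vtxV a (i.val + d)))⁻¹ = 1 := by
    rw [← E]
    exact Finset.prod_congr rfl fun i _ => by simp only [hvi i]
  have hre : ∏ i : Fin (k+2), HX (chk a (i.val+1)) (vtxV a i.val)
      = ∏ i : Fin (k+2), HX (chk a i.val) (vtxV a (i.val + d)) := by
    apply Fintype.prod_equiv (Equiv.addRight (1 : Fin (k+2)))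
    intro i
    show HX (chk a (i.val+1)) (vtxV a i.val)
        = HX (chk a ((i + 1 : Fin (k+2)) : ℕ)) (vtxV a (((i + 1 : Fin (k+2)) : ℕ) + d))
    rw [show (chk a ((i + 1 : Fin (k+2)) : ℕ) : TorusCX n) = chk a (i.val+1) from
          (chk_eq_iff _ _ _ _).2 ⟨rfl, hcast i⟩, hvi i]
  rw [show Finset.range n = Finset.range (k+2) from by rw [hk],
      ← Fin.prod_univ_eq_prod_range (fun t => uu HX a t) (k+2)]
  unfold uu
  rw [Finset.prod_mul_distrib, Finset.prod_inv_distrib, hre]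
  rw [Finset.prod_mul_distrib, Finset.prod_inv_distrib] at E'
  exact E'

end ratios

/-! ### The left-kernel vector -/

section potential
variable {m : ℕ} (HX : Matrix (TorusCX n) (TorusV n) (GaloisField 2 m))
variable (hX : ∀ c v, HX c v ≠ 0 ↔ torusAdj c.1 v.1)
variable (hcyc : CycleProdOne HX)

noncomputable def YY (a b : ℕ) : GaloisField 2 m :=
  (∏ s ∈ Finset.range a, rr HX s 0) * (∏ t ∈ Finset.range b, uu HX a t)

noncomputable def yy : TorusCX n → GaloisField 2 m :=
  fun p => YY HX (p.1.1.val / 2) (p.1.2.val / 2)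

lemma Ystep_v (a b : ℕ) : YY HX a (b+1) = YY HX a b * uu HX a b := by
  unfold YY
  rw [Finset.prod_range_succ]
  ring

include hX hcyc

lemma Ystep_h (hn : 2 ≤ n) : ∀ b a, YY HX (a+1) b = YY HX a b * rr HX a b := by
  intro b
  induction b with
  | zero =>
    intro a
    unfold YY
    rw [Finset.prod_range_succ]
    ring
  | succ b ih =>
    intro a
    rw [Ystep_v, Ystep_v, ih a]
    have hface := face HX hX hcyc hn a b
    linear_combination (YY HX a b) * hface

lemma YperA (hn : 2 ≤ n) (b : ℕ) : ∀ a, YY HX (a+n) b = YY HX a b := by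
  intro a
  induction a with
  | zero =>
    show YY HX (0+n) b = YY HX 0 b
    unfold YY
    rw [zero_add, rowone HX hX hcyc hn 0]
    simp only [Finset.range_zero, Finset.prod_empty, one_mul]
    exact Finset.prod_congr rfl fun t _ => uu_congr HX (by simp [Nat.mod_self]) rfl
  | succ a ih =>
    rw [show a + 1 + n = (a + n) + 1 from by omega, Ystep_h HX hX hcyc hn b (a+n), ih,
        Ystep_h HX hX hcyc hn b a,
        rr_congr HX (Nat.add_mod_right a n) rfl]

lemma YperB (hn : 2 ≤ n) (a : ℕ) : ∀ b, YY HX a (b+n) = YY HX a b := by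
  intro b
  induction b with
  | zero =>
    show YY HX a (0+n) = YY HX a 0
    unfold YY
    rw [zero_add, colone HX hX hcyc hn a]
    simp
  | succ b ih =>
    rw [show b + 1 + n = (b + n) + 1 from by omega, Ystep_v, ih, Ystep_v,
        uu_congr HX rfl (Nat.add_mod_right b n)]

lemma Ymod (hn : 2 ≤ n) (a b : ℕ) : YY HX a b = YY HX (a%n) (b%n) := by
  have key1 : ∀ k a b, YY HX (a + k*n) b = YY HX a b := by
    intro k
    induction k with
    | zero => simp
    | succ k ih =>
      intro a b
      rw [show a + (k+1)*n = (a + k*n) + n from by ring, YperA HX hX hcyc hn b, ih]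
  have key2 : ∀ k a b, YY HX a (b + k*n) = YY HX a b := by
    intro k
    induction k with
    | zero => simp
    | succ k ih =>
      intro a b
      rw [show b + (k+1)*n = (b + k*n) + n from by ring, YperB HX hX hcyc hn a, ih]
  calc YY HX a b = YY HX (a%n + (a/n)*n) b := by rw [Nat.mod_add_div']
  _ = YY HX (a%n) b := key1 (a/n) _ _
  _ = YY HX (a%n) (b%n + (b/n)*n) := by rw [Nat.mod_add_div']
  _ = YY HX (a%n) (b%n) := key2 (b/n) _ _

omit hX hcyc in
lemma yy_chk (a b : ℕ) : yy HX (chk a b) = YY HX (a%n) (b%n) := by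
  unfold yy
  have h1 : (chk a b : TorusCX n).1.1.val = 2*(a%n)+1 := val_odd a
  have h2 : (chk a b : TorusCX n).1.2.val = 2*(b%n) := val_even b
  rw [h1, h2, show (2*(a%n)+1)/2 = a%n from by omega, show (2*(b%n))/2 = b%n from by omega]

omit hX hcyc in
lemma yy_one : yy HX (chk 0 0) = 1 := by
  rw [yy_chk]
  unfold YY
  simp

lemma yy_stepH (hn : 2 ≤ n) (a b : ℕ) :
    yy HX (chk (a+1) b) = yy HX (chk a b) * rr HX a b := by
  rw [yy_chk, yy_chk, ← Ymod HX hX hcyc hn (a+1) b, ← Ymod HX hX hcyc hn a b]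
  exact Ystep_h HX hX hcyc hn b a

lemma yy_stepV (hn : 2 ≤ n) (a b : ℕ) :
    yy HX (chk a (b+1)) = yy HX (chk a b) * uu HX a b := by
  rw [yy_chk, yy_chk, ← Ymod HX hX hcyc hn a (b+1), ← Ymod HX hX hcyc hn a b]
  exact Ystep_v HX a b

lemma yy_mem (hn : 2 ≤ n) (v : TorusV n) : ∑ c, HX c v * yy HX c = 0 := by
  rcases var_rep v with ⟨A, B, rfl⟩ | ⟨A, B, rfl⟩
  · obtain ⟨d, hd⟩ : ∃ d, n = d + 1 := ⟨n - 1, by omega⟩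
    have hv : (vtxE A B : TorusV n) = vtxE ((A+d)+1) B := by
      refine (vtxE_eq_iff _ _ _ _).2 ⟨?_, rfl⟩
      rw [show A + d + 1 = A + n from by omega]
      exact (Nat.add_mod_right A n).symm
    rw [hv, sum_red_E HX hX _ hn (A+d) B, yy_stepH HX hX hcyc hn (A+d) B]
    have h2 : HX (chk ((A+d)+1) B) (vtxE ((A+d)+1) B) ≠ 0 := hE2 HX hX (A+d) B
    unfold rr
    rw [show HX (chk ((A+d)+1) B) (vtxE ((A+d)+1) B) *
        (yy HX (chk (A+d) B) * (HX (chk (A+d) B) (vtxE ((A+d)+1) B) *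
          (HX (chk ((A+d)+1) B) (vtxE ((A+d)+1) B))⁻¹))
        = HX (chk (A+d) B) (vtxE ((A+d)+1) B) * yy HX (chk (A+d) B) from by
      field_simp]
    exact CharTwo.add_self_eq_zero _
  · rw [sum_red_V HX hX _ hn A B, yy_stepV HX hX hcyc hn A B]
    have h2 : HX (chk A (B+1)) (vtxV A B) ≠ 0 := hV2 HX hX A B
    unfold uu
    rw [show HX (chk A (B+1)) (vtxV A B) *
        (yy HX (chk A B) * (HX (chk A B) (vtxV A B) * (HX (chk A (B+1)) (vtxV A B))⁻¹))
        = HX (chk A B) (vtxV A B) * yy HX (chk A B) from by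
      field_simp]
    exact CharTwo.add_self_eq_zero _

omit hcyc in
lemma kernel_zero (hn : 2 ≤ n) (y : TorusCX n → GaloisField 2 m)
    (hy : ∀ v, ∑ c, HX c v * y c = 0) (h0 : y (chk 0 0) = 0) : ∀ p, y p = 0 := by
  have stepH : ∀ a b, y (chk a b) = 0 → y (chk (a+1) b) = 0 := by
    intro a b h
    have e := hy (vtxE (a+1) b)
    rw [sum_red_E HX hX y hn a b, h, mul_zero, zero_add] at e
    exact (mul_eq_zero.1 e).resolve_left (hE2 HX hX a b)
  have stepV : ∀ a b, y (chk a b) = 0 → y (chk a (b+1)) = 0 := by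
    intro a b h
    have e := hy (vtxV a b)
    rw [sum_red_V HX hX y hn a b, h, mul_zero, zero_add] at e
    exact (mul_eq_zero.1 e).resolve_left (hV2 HX hX a b)
  have hA : ∀ a, y (chk a 0) = 0 := by
    intro a
    induction a with
    | zero => exact h0
    | succ a ih => exact stepH a 0 ih
  have hAB : ∀ b a, y (chk a b) = 0 := by
    intro b
    induction b with
    | zero => exact hA
    | succ b ih => exact fun a => stepV a b (ih a)
  intro p
  rw [chk_rep p]
  exact hAB _ _

end potential
end Toric

/-- **Dimension of the q-ary toric code (Lemma 2).**
Let `C_X^{(q)}` be the `q`-ary code (`q = 2^m`, `m ≥ 1`) obtained from the toric code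
Tanner graph `G_X` (on the `2n × 2n` torus, `n ≥ 2`) by labelling its edges with
nonzero elements of `F_q` in such a way that the product over every cycle of `G_X`
equals `1`.  Then the `F_q`-dimension of `C_X^{(q)} = ker H_X^{(q)}` is exactly
`n² + 1`. -/
theorem qary_toric_dimension (n m : ℕ) [NeZero (2*n)] (hn : 2 ≤ n) (hm : 0 < m)
    (HX : Matrix (TorusCX n) (TorusV n) (GaloisField 2 m))
    (hX : ∀ c v, HX c v ≠ 0 ↔ torusAdj c.1 v.1)
    (hcyc : CycleProdOne HX) :
    finrank (GaloisField 2 m) (LinearMap.ker HX.mulVecLin) = n^2 + 1 := by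
  classical
  have hker : ∀ y : TorusCX n → GaloisField 2 m,
      y ∈ LinearMap.ker HXᵀ.mulVecLin ↔ ∀ v, ∑ c, HX c v * y c = 0 := by
    intro y
    rw [LinearMap.mem_ker]
    have hmv : ∀ v, (HXᵀ *ᵥ y) v = ∑ c, HX c v * y c := by
      intro v
      show (HXᵀ v) ⬝ᵥ y = _
      simp only [dotProduct, Matrix.transpose_apply]
    constructor
    · intro h v
      have h2 := congrFun h v
      rw [Matrix.mulVecLin_apply] at h2
      rw [← hmv v]
      exact h2
    · intro h
      funext v
      rw [Matrix.mulVecLin_apply]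
      show (HXᵀ *ᵥ y) v = 0
      rw [hmv v]
      exact h v
  set Kt := LinearMap.ker (HXᵀ.mulVecLin) with hKtdef
  have y0mem : Toric.yy HX ∈ Kt := (hker _).2 (Toric.yy_mem HX hX hcyc hn)
  let ev : Kt →ₗ[GaloisField 2 m] GaloisField 2 m :=
    (LinearMap.proj (Toric.chk 0 0)).comp Kt.subtype
  have hinj : Function.Injective ev := by
    rw [injective_iff_map_eq_zero]
    rintro ⟨y, hy⟩ h
    have hz : ∀ p, y p = 0 :=
      Toric.kernel_zero HX hX hn y ((hker y).1 hy) h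
    exact Subtype.ext (funext hz)
  have hsurj : Function.Surjective ev := by
    intro t
    refine ⟨t • ⟨Toric.yy HX, y0mem⟩, ?_⟩
    show ((t • (⟨Toric.yy HX, y0mem⟩ : Kt)) : TorusCX n → GaloisField 2 m) (Toric.chk 0 0) = t
    simp [Toric.yy_one HX]
  have hKt : finrank (GaloisField 2 m) Kt = 1 := by
    rw [(LinearEquiv.ofBijective ev ⟨hinj, hsurj⟩).finrank_eq]
    exact finrank_self _
  have h1 : HX.rank + finrank (GaloisField 2 m) (LinearMap.ker HX.mulVecLin)
      = Fintype.card (TorusV n) := by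
    simpa [Matrix.rank, Module.finrank_pi] using
      LinearMap.finrank_range_add_finrank_ker (HX.mulVecLin)
  have h2 : HXᵀ.rank + finrank (GaloisField 2 m) Kt = Fintype.card (TorusCX n) := by
    simpa [Matrix.rank, Module.finrank_pi] using
      LinearMap.finrank_range_add_finrank_ker (HXᵀ.mulVecLin)
  have h3 : HXᵀ.rank = HX.rank := Matrix.rank_transpose HX
  have h4 := Toric.card_V (n := n)
  have h5 := Toric.card_CX (n := n)
  omega
end

section
/- Suppose the q-ary toric codes C_X^{(q)} and C_Z^{(q)} satisfy (C_Z^{(q)})^⊥ ⊆ C_X^{(q)} and the product over every cycle of the Tanner graph of C_X^{(q)} equals 1. Then the product over every cycle of the Tanner graph of C_Z^{(q)} also equals 1. -/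
open Matrix Module Finset BigOperators

private lemma split3 {M : Type*} [CommMonoid M] (f : ℕ → M) {s t L : ℕ} (hs : s ≤ t) (ht : t ≤ L) :
    ∏ u ∈ Finset.range L, f u =
      ((∏ u ∈ Finset.range s, f u) * ∏ u ∈ Finset.range (t-s), f (s+u)) *
        ∏ u ∈ Finset.range (L-t), f (t+u) := by
  have h1 : ∏ u ∈ Finset.range t, f u
      = (∏ u ∈ Finset.range s, f u) * ∏ u ∈ Finset.range (t-s), f (s+u) := by
    conv_lhs => rw [show t = s + (t-s) from by omega]
    rw [Finset.prod_range_add]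
  have h2 : ∏ u ∈ Finset.range L, f u
      = (∏ u ∈ Finset.range t, f u) * ∏ u ∈ Finset.range (L-t), f (t+u) := by
    conv_lhs => rw [show L = t + (L-t) from by omega]
    rw [Finset.prod_range_add]
  rw [h2, h1]

private lemma walk_prod {F C V : Type*} [Field F] (H : Matrix C V F) (hcyc : CycleProdOne H) :
    ∀ L : ℕ, ∀ v : ℕ → V, ∀ c : ℕ → C, v L = v 0 →
    (∀ t, t < L → H (c t) (v t) ≠ 0) → (∀ t, t < L → H (c t) (v (t+1)) ≠ 0) →
    ∏ t ∈ Finset.range L, H (c t) (v (t+1)) * (H (c t) (v t))⁻¹ = 1 := by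
  intro L
  induction L using Nat.strong_induction_on with
  | _ L IH =>
  intro v c hclose h1 h2
  match L, IH, hclose, h1, h2 with
  | 0, IH, hclose, h1, h2 => simp
  | 1, IH, hclose, h1, h2 =>
      rw [Finset.prod_range_one, hclose, mul_inv_cancel₀ (h1 0 (by omega))]
  | (L'+2), IH, hclose, h1, h2 =>
  set f : ℕ → F := fun u => H (c u) (v (u+1)) * (H (c u) (v u))⁻¹ with hf
  show ∏ u ∈ Finset.range (L'+2), f u = 1
  -- splitting on a repeated vertex
  have vsplit : ∀ s t : ℕ, s < t → t < L'+2 → v s = v t →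
      ∏ u ∈ Finset.range (L'+2), f u = 1 := by
    intro s t hst ht heq
    set D := t - s with hD
    set v2 : ℕ → V := fun u => if u ≤ s then v u else v (u + D) with hv2
    set c2 : ℕ → C := fun u => if u < s then c u else c (u + D) with hc2
    have P1 : ∏ u ∈ Finset.range D, f (s+u) = 1 := by
      refine IH D (by omega) (fun u => v (s+u)) (fun u => c (s+u)) ?_ ?_ ?_
      · simpa [show s + D = t from by omega] using heq.symm
      · intro u hu; exact h1 (s+u) (by omega)
      · intro u hu; exact h2 (s+u) (by omega)
    have P2 : (∏ u ∈ Finset.range s, f u) * ∏ u ∈ Finset.range (L'+2-t), f (t+u) = 1 := by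
      have key : ∏ u ∈ Finset.range (L'+2-D),
          H (c2 u) (v2 (u+1)) * (H (c2 u) (v2 u))⁻¹ = 1 := by
        refine IH (L'+2-D) (by omega) v2 c2 ?_ ?_ ?_
        · show v2 (L'+2-D) = v2 0
          rw [hv2]; simp only []
          rw [if_neg (by omega), if_pos (by omega), show L'+2-D+D = L'+2 from by omega, hclose]
        · intro u hu
          rw [hv2, hc2]; simp only []
          by_cases hus : u < s
          · rw [if_pos hus, if_pos (by omega)]; exact h1 u (by omega)
          · by_cases hus' : u ≤ s
            · have hu' : u = s := by omega
              rw [hu', if_neg (by omega : ¬ s < s), if_pos le_rfl, heq, show s + D = t from by omega]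
              exact h1 t (by omega)
            · rw [if_neg hus, if_neg hus']; exact h1 (u+D) (by omega)
        · intro u hu
          rw [hv2, hc2]; simp only []
          by_cases hus : u < s
          · rw [if_pos hus, if_pos (by omega)]; exact h2 u (by omega)
          · rw [if_neg hus, if_neg (by omega), show u+1+D = u+D+1 from by omega]
            exact h2 (u+D) (by omega)
      have conv : ∏ u ∈ Finset.range (L'+2-D), H (c2 u) (v2 (u+1)) * (H (c2 u) (v2 u))⁻¹
          = (∏ u ∈ Finset.range s, f u) * ∏ u ∈ Finset.range (L'+2-t), f (t+u) := by
        rw [show L'+2-D = s + (L'+2-t) from by omega, Finset.prod_range_add]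
        congr 1
        · refine Finset.prod_congr rfl (fun u hu => ?_)
          rw [Finset.mem_range] at hu
          rw [hv2, hc2]; simp only []
          rw [if_pos hu, if_pos (by omega : u ≤ s), if_pos (by omega : u + 1 ≤ s)]
        · refine Finset.prod_congr rfl (fun u hu => ?_)
          rw [Finset.mem_range] at hu
          rw [hv2, hc2]; simp only []
          rw [if_neg (by omega : ¬ s + u < s), if_neg (by omega : ¬ s + u + 1 ≤ s),
            show s+u+1+D = t+u+1 from by omega]
          by_cases hu0 : u = 0
          · subst hu0
            rw [if_pos (by omega : s + 0 ≤ s), show s + 0 = s from rfl, heq,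
              show s + D = t from by omega]
            rfl
          · rw [if_neg (by omega : ¬ s + u ≤ s), show s+u+D = t+u from by omega]
      rw [← conv]; exact key
    rw [split3 f (by omega : s ≤ t) (by omega : t ≤ L'+2)]
    rw [show t - s = D from rfl, mul_right_comm, P2, one_mul, P1]
  -- splitting on a repeated check (assuming no repeated vertex handled separately)
  have csplit : ∀ s t : ℕ, s < t → t < L'+2 → c s = c t →
      ∏ u ∈ Finset.range (L'+2), f u = 1 := by
    intro s t hst ht hceq
    set D := t - s with hD
    set vA : ℕ → V := fun u => if u < D then v (s+1+u) else v (s+1) with hvA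
    set cA : ℕ → C := fun u => c (s+1+u) with hcA
    set v2 : ℕ → V := fun u => if u ≤ s then v u else v (u + D) with hv2
    set c2 : ℕ → C := fun u => if u < s then c u else c (u + D) with hc2
    have PA : ∏ u ∈ Finset.range D, H (cA u) (vA (u+1)) * (H (cA u) (vA u))⁻¹ = 1 := by
      refine IH D (by omega) vA cA ?_ ?_ ?_
      · show vA D = vA 0
        rw [hvA]; simp only []
        rw [if_neg (by omega), if_pos (by omega)]
      · intro u hu
        rw [hvA, hcA]; simp only []
        rw [if_pos hu]; exact h1 (s+1+u) (by omega)
      · intro u hu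
        rw [hvA, hcA]; simp only []
        by_cases hu' : u + 1 < D
        · rw [if_pos hu']; exact h2 (s+1+u) (by omega)
        · rw [if_neg hu', show s+1+u = t from by omega, ← hceq]
          exact h2 s (by omega)
    have PB : ∏ u ∈ Finset.range (L'+2-D),
        H (c2 u) (v2 (u+1)) * (H (c2 u) (v2 u))⁻¹ = 1 := by
      refine IH (L'+2-D) (by omega) v2 c2 ?_ ?_ ?_
      · show v2 (L'+2-D) = v2 0
        rw [hv2]; simp only []
        rw [if_neg (by omega), if_pos (by omega), show L'+2-D+D = L'+2 from by omega, hclose]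
      · intro u hu
        rw [hv2, hc2]; simp only []
        by_cases hus : u < s
        · rw [if_pos hus, if_pos (by omega)]; exact h1 u (by omega)
        · by_cases hus' : u ≤ s
          · have hu' : u = s := by omega
            rw [hu', if_neg (by omega : ¬ s < s), if_pos le_rfl, show s + D = t from by omega, ← hceq]
            exact h1 s (by omega)
          · rw [if_neg hus, if_neg hus']; exact h1 (u+D) (by omega)
      · intro u hu
        rw [hv2, hc2]; simp only []
        by_cases hus : u < s
        · rw [if_pos hus, if_pos (by omega)]; exact h2 u (by omega)
        · rw [if_neg hus, if_neg (by omega), show u+1+D = u+D+1 from by omega]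
          exact h2 (u+D) (by omega)
    have EA : ∏ u ∈ Finset.range D, H (cA u) (vA (u+1)) * (H (cA u) (vA u))⁻¹
        = (∏ u ∈ Finset.range (D-1), f (s+1+u)) *
            (H (c t) (v (s+1)) * (H (c t) (v t))⁻¹) := by
      rw [show D = (D-1)+1 from by omega, Finset.prod_range_succ]
      congr 1
      · refine Finset.prod_congr rfl (fun u hu => ?_)
        rw [Finset.mem_range] at hu
        rw [hvA, hcA]; simp only []
        rw [if_pos (show u < D from by omega), if_pos (show u+1 < D from by omega)]
        rfl
      · rw [hvA, hcA]; simp only []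
        rw [if_neg (show ¬ (D-1)+1 < D from by omega), if_pos (show D-1 < D from by omega),
          show s+1+(D-1) = t from by omega]
    have EB : ∏ u ∈ Finset.range (L'+2-D),
        H (c2 u) (v2 (u+1)) * (H (c2 u) (v2 u))⁻¹
        = (∏ u ∈ Finset.range s, f u) *
            ((∏ u ∈ Finset.range (L'+1-t), f (t+1+u)) *
              (H (c t) (v (t+1)) * (H (c t) (v s))⁻¹)) := by
      rw [show L'+2-D = s + ((L'+1-t)+1) from by omega, Finset.prod_range_add]
      congr 1
      · refine Finset.prod_congr rfl (fun u hu => ?_)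
        rw [Finset.mem_range] at hu
        rw [hv2, hc2]; simp only []
        rw [if_pos hu, if_pos (by omega : u ≤ s), if_pos (by omega : u + 1 ≤ s)]
      · rw [Finset.prod_range_succ']
        congr 1
        · refine Finset.prod_congr rfl (fun u hu => ?_)
          rw [Finset.mem_range] at hu
          rw [hv2, hc2]; simp only []
          rw [if_neg (by omega : ¬ s + (u+1) < s), if_neg (by omega : ¬ s + (u+1) ≤ s),
            if_neg (by omega : ¬ s + (u+1) + 1 ≤ s),
            show s+(u+1)+1+D = t+1+u+1 from by omega, show s+(u+1)+D = t+1+u from by omega]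
        · rw [hv2, hc2]; simp only []
          rw [if_neg (by omega : ¬ s + 0 < s), if_pos (by omega : s + 0 ≤ s),
            if_neg (by omega : ¬ s + 0 + 1 ≤ s),
            show s+0+1+D = t+1 from by omega, show s+0+D = t from by omega,
            show s + 0 = s from rfl]
    rw [EA] at PA
    rw [EB] at PB
    rw [split3 f (by omega : s+1 ≤ t+1) (by omega : t+1 ≤ L'+2), Finset.prod_range_succ,
      show t+1-(s+1) = D from by omega, show L'+2-(t+1) = L'+1-t from by omega]
    have eD : ∏ u ∈ Finset.range D, f (s+1+u)
        = (∏ u ∈ Finset.range (D-1), f (s+1+u)) * f t := by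
      conv_lhs => rw [show D = (D-1)+1 from by omega]
      rw [Finset.prod_range_succ, show s+1+(D-1) = t from by omega]
    rw [eD]
    have hfs : f s = H (c t) (v (s+1)) * (H (c t) (v s))⁻¹ := by
      rw [hf]; simp only []; rw [hceq]
    have hft : f t = H (c t) (v (t+1)) * (H (c t) (v t))⁻¹ := rfl
    rw [hfs, hft]
    set A0 := ∏ u ∈ Finset.range s, f u
    set A1 := ∏ u ∈ Finset.range (D-1), f (s+1+u)
    set A2 := ∏ u ∈ Finset.range (L'+1-t), f (t+1+u)
    have expand : (A0 * (H (c t) (v (s+1)) * (H (c t) (v s))⁻¹)) *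
        (A1 * (H (c t) (v (t+1)) * (H (c t) (v t))⁻¹)) * A2
        = ((A1 * (H (c t) (v (s+1)) * (H (c t) (v t))⁻¹)) *
            (A0 * (A2 * (H (c t) (v (t+1)) * (H (c t) (v s))⁻¹)))) := by
      ring
    rw [expand, PA, one_mul, PB]
  -- main case analysis
  by_cases hv : ∀ s, s < L'+2 → ∀ t, t < L'+2 → v s = v t → s = t
  · by_cases hc : ∀ s, s < L'+2 → ∀ t, t < L'+2 → c s = c t → s = t
    · -- both injective: this is a genuine cycle
      set vf : Fin (L'+2) → V := fun i => v i.val with hvf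
      set cf : Fin (L'+2) → C := fun i => c i.val with hcf
      have hvinj : Function.Injective vf := fun a b hab =>
        Fin.ext (hv _ a.isLt _ b.isLt hab)
      have hcinj : Function.Injective cf := fun a b hab =>
        Fin.ext (hc _ a.isLt _ b.isLt hab)
      have key : ∀ i : Fin (L'+2), vf (i+1) = v (i.val + 1) := by
        intro i
        rw [hvf]; simp only []
        rw [Fin.val_add_one]
        by_cases hi : i = Fin.last (L'+1)
        · rw [if_pos hi, ← hclose]
          congr 1
          rw [hi]; rfl
        · rw [if_neg hi]
      have hadj1 : ∀ i, H (cf i) (vf i) ≠ 0 := fun i => h1 i.val i.isLt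
      have hadj2 : ∀ i, H (cf i) (vf (i+1)) ≠ 0 := by
        intro i; rw [key i]; exact h2 i.val i.isLt
      have main := hcyc L' vf cf hvinj hcinj hadj1 hadj2
      have conv : ∏ i : Fin (L'+2), H (cf i) (vf (i+1)) * (H (cf i) (vf i))⁻¹
          = ∏ u ∈ Finset.range (L'+2), f u := by
        rw [← Fin.prod_univ_eq_prod_range f (L'+2)]
        refine Finset.prod_congr rfl (fun i _ => ?_)
        rw [key i]
      rw [← conv]; exact main
    · push_neg at hc
      obtain ⟨s, hs, t, ht, hceq, hne⟩ := hc
      rcases lt_or_gt_of_ne hne with h | h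
      · exact csplit s t h ht hceq
      · exact csplit t s h hs hceq.symm
  · push_neg at hv
    obtain ⟨s, hs, t, ht, heq, hne⟩ := hv
    rcases lt_or_gt_of_ne hne with h | h
    · exact vsplit s t h ht heq
    · exact vsplit t s h hs heq.symm

open Fin.NatCast

set_option maxHeartbeats 1600000 in
/-- **Lemma 1: cycle products transfer from `G_X` to `G_Z`.**
Suppose the `q`-ary toric codes `C_X^{(q)} = ker H_X^{(q)}` and
`C_Z^{(q)} = ker H_Z^{(q)}` (`q = 2^m`, edges of the toric Tanner graphs labelled
with nonzero elements of `F_q`) satisfy `(C_Z^{(q)})^⊥ ⊆ C_X^{(q)}`, i.e.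
`H_X^{(q)} * (H_Z^{(q)})ᵀ = 0`, and the product over every cycle of the Tanner graph
of `C_X^{(q)}` equals `1`.  Then the product over every cycle of the Tanner graph of
`C_Z^{(q)}` also equals `1`. -/
theorem qary_toric_cycle_prod_transfer (n m : ℕ) [NeZero (2*n)] (hn : 2 ≤ n) (hm : 0 < m)
    (HX : Matrix (TorusCX n) (TorusV n) (GaloisField 2 m))
    (HZ : Matrix (TorusCZ n) (TorusV n) (GaloisField 2 m))
    (hX : ∀ c v, HX c v ≠ 0 ↔ torusAdj c.1 v.1)
    (hZ : ∀ c v, HZ c v ≠ 0 ↔ torusAdj c.1 v.1)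
    (horth : HX * HZᵀ = 0)
    (hcyc : CycleProdOne HX) :
    CycleProdOne HZ := by
  intro k vZ cZ _ _ hZ1 hZ2
  haveI : Fact (1 < 2*n) := ⟨by omega⟩
  have char2 : ∀ a b : GaloisField 2 m, a + b = 0 → a = b := by
    intro a b h
    rw [eq_neg_of_add_eq_zero_left h, CharTwo.neg_eq]
  have horth' : ∀ (x : TorusCX n) (z : TorusCZ n), ∑ w : TorusV n, HX x w * HZ z w = 0 := by
    intro x z
    have := congrFun (congrFun horth x) z
    simpa [Matrix.mul_apply, Matrix.transpose_apply] using this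
  have hkne : ∀ j : ℕ, 0 < j → j < 2*n → (j : ZMod (2*n)) ≠ 0 := by
    intro j h0 hlt hj
    have := ZMod.val_cast_of_lt hlt
    rw [hj, ZMod.val_zero] at this; omega
  have ne1 : (1 : ZMod (2*n)) ≠ 0 := by have := hkne 1 (by omega) (by omega); simpa using this
  have ne2 : (2 : ZMod (2*n)) ≠ 0 := by have := hkne 2 (by omega) (by omega); simpa using this
  have ne3 : (3 : ZMod (2*n)) ≠ 0 := by have := hkne 3 (by omega) (by omega); simpa using this
  have paradd : ∀ a : ZMod (2*n), (a + 1).val % 2 = (a.val + 1) % 2 := by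
    intro a
    rw [ZMod.val_add, ZMod.val_one]
    exact Nat.mod_mod_of_dvd _ ⟨n, rfl⟩
  have parsub : ∀ a : ZMod (2*n), (a - 1).val % 2 = (a.val + 1) % 2 := by
    intro a
    have h := paradd (a - 1)
    rw [sub_add_cancel] at h
    omega
  have pare : ∀ (a e : ZMod (2*n)), e = 1 ∨ e = -1 → (a + e).val % 2 = (a.val + 1) % 2 := by
    rintro a e (rfl | rfl)
    · exact paradd a
    · rw [← sub_eq_add_neg]; exact parsub a
  -- the only common neighbours of the `Z`-check `z` and the corner `X`-check are the two
  -- variable nodes of the corresponding square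
  have common : ∀ (z : TorusCZ n) (e d : ZMod (2*n)), e = 1 ∨ e = -1 → d = 1 ∨ d = -1 →
      ∀ c : TorusV n, torusAdj (z.1.1 + e, z.1.2 + d) c.1 → torusAdj z.1 c.1 →
      c.1 = (z.1.1 + e, z.1.2) ∨ c.1 = (z.1.1, z.1.2 + d) := by
    intro z e d he hd c hxc hzc
    obtain ⟨⟨i, j⟩, hz⟩ := z
    obtain ⟨⟨c1, c2⟩, hc⟩ := c
    dsimp only at hxc hzc ⊢
    simp only [Prod.mk.injEq]
    rcases he with rfl | rfl <;> rcases hd with rfl | rfl <;>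
      rcases hxc with ⟨h1, h2⟩ | ⟨h1, h2⟩ | ⟨h1, h2⟩ | ⟨h1, h2⟩ <;>
      rcases hzc with ⟨h3, h4⟩ | ⟨h3, h4⟩ | ⟨h3, h4⟩ | ⟨h3, h4⟩ <;>
      first
      | (left; constructor <;> first | linear_combination h1 | linear_combination h2 | linear_combination h3 | linear_combination h4)
      | (right; constructor <;> first | linear_combination h1 | linear_combination h2 | linear_combination h3 | linear_combination h4)
      | (exact absurd (show (1 : ZMod (2*n)) = 0 by first | linear_combination h1 - h3 | linear_combination h3 - h1 | linear_combination h2 - h4 | linear_combination h4 - h2) ne1)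
      | (exact absurd (show (2 : ZMod (2*n)) = 0 by first | linear_combination h1 - h3 | linear_combination h3 - h1 | linear_combination h2 - h4 | linear_combination h4 - h2) ne2)
      | (exact absurd (show (3 : ZMod (2*n)) = 0 by first | linear_combination h1 - h3 | linear_combination h3 - h1 | linear_combination h2 - h4 | linear_combination h4 - h2) ne3)
  -- the square (orthogonality) relation
  have square : ∀ (x : TorusCX n) (z : TorusCZ n) (a b : TorusV n), a ≠ b →
      (∀ w : TorusV n, torusAdj x.1 w.1 → torusAdj z.1 w.1 → w = a ∨ w = b) →
      HX x a * HZ z a = HX x b * HZ z b := by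
    intro x z a b hab hcond
    have hsum : ∑ w : TorusV n, HX x w * HZ z w = HX x a * HZ z a + HX x b * HZ z b := by
      apply Fintype.sum_eq_add a b hab
      rintro w ⟨hwa, hwb⟩
      by_cases h1 : torusAdj x.1 w.1
      · by_cases h2 : torusAdj z.1 w.1
        · rcases hcond w h1 h2 with rfl | rfl
          · exact absurd rfl hwa
          · exact absurd rfl hwb
        · have : HZ z w = 0 := by
            by_contra hh; exact h2 ((hZ z w).mp hh)
          rw [this, mul_zero]
      · have : HX x w = 0 := by
          by_contra hh; exact h1 ((hX x w).mp hh)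
        rw [this, zero_mul]
    exact char2 _ _ (by rw [← hsum]; exact horth' x z)
  -- the basic square move: `a` a horizontal neighbour, `b` a vertical neighbour of `z`
  have perp : ∀ (z : TorusCZ n) (e d : ZMod (2*n)), e = 1 ∨ e = -1 → d = 1 ∨ d = -1 →
      ∀ (a b : TorusV n), a.1 = (z.1.1 + e, z.1.2) → b.1 = (z.1.1, z.1.2 + d) →
      ∃ x : TorusCX n, HX x a ≠ 0 ∧ HX x b ≠ 0 ∧
        HX x a * HZ z a = HX x b * HZ z b := by
    intro z e d he hd a b ha hb
    have hx1 : (z.1.1 + e).val % 2 = 1 := by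
      have h1 := pare z.1.1 e he; have hz1 := z.2.1; omega
    have hx2 : (z.1.2 + d).val % 2 = 0 := by
      have h2 := pare z.1.2 d hd; have hz2 := z.2.2; omega
    refine ⟨⟨(z.1.1 + e, z.1.2 + d), hx1, hx2⟩, ?_, ?_, ?_⟩
    · rw [hX, ha]
      rcases hd with rfl | rfl
      · right; right; right; exact ⟨rfl, by ring⟩
      · right; right; left; exact ⟨rfl, by ring⟩
    · rw [hX, hb]
      rcases he with rfl | rfl
      · right; left; exact ⟨by ring, rfl⟩
      · left; exact ⟨by ring, rfl⟩
    · have hane : a ≠ b := by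
        intro h
        have h1 : a.1.1 = b.1.1 := by rw [h]
        rw [ha, hb] at h1
        dsimp only at h1
        rcases he with rfl | rfl
        · exact ne1 (by linear_combination h1)
        · exact ne1 (by linear_combination -h1)
      refine square _ z a b hane ?_
      intro w h1 h2
      rcases common z e d he hd w h1 h2 with h | h
      · exact Or.inl (Subtype.ext (by rw [h, ← ha]))
      · exact Or.inr (Subtype.ext (by rw [h, ← hb]))
  -- every variable node has an adjacent X-check
  have adjx : ∀ w : TorusV n, ∃ x : TorusCX n, HX x w ≠ 0 := by
    intro w
    by_cases hp : w.1.1.val % 2 = 0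
    · have hq : w.1.2.val % 2 = 0 := by have := w.2; omega
      refine ⟨⟨(w.1.1 + 1, w.1.2), ?_, hq⟩, ?_⟩
      · rw [paradd]; omega
      · rw [hX]; right; left; exact ⟨by ring, rfl⟩
    · have hq : w.1.2.val % 2 = 1 := by have := w.2; omega
      refine ⟨⟨(w.1.1, w.1.2 + 1), ?_, ?_⟩, ?_⟩
      · show w.1.1.val % 2 = 1; omega
      · show (w.1.2 + 1).val % 2 = 0; rw [paradd]; omega
      · rw [hX]; right; right; right; exact ⟨rfl, by ring⟩
  -- classification of the neighbours of a Z-check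
  have classify : ∀ (z : TorusCZ n) (w : TorusV n), torusAdj z.1 w.1 →
      (∃ e, (e = 1 ∨ e = -1) ∧ w.1 = (z.1.1 + e, z.1.2)) ∨
      (∃ d, (d = 1 ∨ d = -1) ∧ w.1 = (z.1.1, z.1.2 + d)) := by
    intro z w hw
    rcases hw with ⟨h1, h2⟩ | ⟨h1, h2⟩ | ⟨h1, h2⟩ | ⟨h1, h2⟩
    · exact Or.inl ⟨1, Or.inl rfl, Prod.ext h1 h2⟩
    · exact Or.inl ⟨-1, Or.inr rfl, Prod.ext (by rw [h1]; ring) h2⟩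
    · exact Or.inr ⟨1, Or.inl rfl, Prod.ext h1 h2⟩
    · exact Or.inr ⟨-1, Or.inr rfl, Prod.ext h1 (by rw [h2]; ring)⟩
  -- a two-edge path in the X Tanner graph realising one Z-edge ratio
  have step : ∀ (z : TorusCZ n) (v w : TorusV n), torusAdj z.1 v.1 → torusAdj z.1 w.1 →
      ∃ (u : TorusV n) (x1 x2 : TorusCX n), HX x1 v ≠ 0 ∧ HX x1 u ≠ 0 ∧ HX x2 u ≠ 0 ∧
        HX x2 w ≠ 0 ∧
        (HX x1 u * (HX x1 v)⁻¹) * (HX x2 w * (HX x2 u)⁻¹) = HZ z v * (HZ z w)⁻¹ := by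
    intro z v w hv hw
    have hZv : HZ z v ≠ 0 := (hZ z v).mpr hv
    have hZw : HZ z w ≠ 0 := (hZ z w).mpr hw
    have glue : ∀ (u : TorusV n) (x1 x2 : TorusCX n), HZ z u ≠ 0 →
        HX x1 v ≠ 0 → HX x1 u ≠ 0 → HX x2 u ≠ 0 → HX x2 w ≠ 0 →
        HX x1 u * (HX x1 v)⁻¹ = HZ z v * (HZ z u)⁻¹ →
        HX x2 w * (HX x2 u)⁻¹ = HZ z u * (HZ z w)⁻¹ →
        ∃ (u : TorusV n) (x1 x2 : TorusCX n), HX x1 v ≠ 0 ∧ HX x1 u ≠ 0 ∧ HX x2 u ≠ 0 ∧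
          HX x2 w ≠ 0 ∧
          (HX x1 u * (HX x1 v)⁻¹) * (HX x2 w * (HX x2 u)⁻¹) = HZ z v * (HZ z w)⁻¹ := by
      intro u x1 x2 hZu h1 h2 h3 h4 t1 t2
      refine ⟨u, x1, x2, h1, h2, h3, h4, ?_⟩
      rw [t1, t2, mul_assoc, inv_mul_cancel_left₀ hZu]
    rcases classify z v hv with ⟨e, he, hve⟩ | ⟨d, hd, hvd⟩ <;>
      rcases classify z w hw with ⟨e', he', hwe⟩ | ⟨d', hd', hwd⟩
    · -- both horizontal : go through the vertical neighbour u = (i, j+1)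
      have humem : ((z.1.1).val + (z.1.2 + 1).val) % 2 = 0 := by
        have := paradd z.1.2; have h1 := z.2.1; have h2 := z.2.2; omega
      set u : TorusV n := ⟨(z.1.1, z.1.2 + 1), humem⟩ with hu
      have hadj : torusAdj z.1 u.1 := by right; right; left; exact ⟨rfl, rfl⟩
      have hZu : HZ z u ≠ 0 := (hZ z u).mpr hadj
      obtain ⟨x1, ha1, hb1, r1⟩ := perp z e 1 he (Or.inl rfl) v u hve rfl
      obtain ⟨x2, ha2, hb2, r2⟩ := perp z e' 1 he' (Or.inl rfl) w u hwe rfl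
      refine glue u x1 x2 hZu ha1 hb1 hb2 ha2 ?_ ?_
      · rw [← div_eq_mul_inv, ← div_eq_mul_inv, div_eq_div_iff ha1 hZu]
        first | linear_combination r1 | linear_combination -r1
      · rw [← div_eq_mul_inv, ← div_eq_mul_inv, div_eq_div_iff hb2 hZw]
        first | linear_combination r2 | linear_combination -r2
    · -- v horizontal, w vertical : single square, u = w
      obtain ⟨x1, ha1, hb1, r1⟩ := perp z e d' he hd' v w hve hwd
      obtain ⟨x2, hx2⟩ := adjx w
      refine glue w x1 x2 hZw ha1 hb1 hx2 hx2 ?_ ?_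
      · rw [← div_eq_mul_inv, ← div_eq_mul_inv, div_eq_div_iff ha1 hZw]
        first | linear_combination r1 | linear_combination -r1
      · rw [mul_inv_cancel₀ hx2, mul_inv_cancel₀ hZw]
    · -- v vertical, w horizontal : single square, u = v
      obtain ⟨x2, ha2, hb2, r2⟩ := perp z e' d he' hd w v hwe hvd
      obtain ⟨x1, hx1⟩ := adjx v
      refine glue v x1 x2 hZv hx1 hx1 hb2 ha2 ?_ ?_
      · rw [mul_inv_cancel₀ hx1, mul_inv_cancel₀ hZv]
      · rw [← div_eq_mul_inv, ← div_eq_mul_inv, div_eq_div_iff hb2 hZw]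
        first | linear_combination r2 | linear_combination -r2
    · -- both vertical : go through the horizontal neighbour u = (i+1, j)
      have humem : ((z.1.1 + 1).val + (z.1.2).val) % 2 = 0 := by
        have := paradd z.1.1; have h1 := z.2.1; have h2 := z.2.2; omega
      set u : TorusV n := ⟨(z.1.1 + 1, z.1.2), humem⟩ with hu
      have hadj : torusAdj z.1 u.1 := by left; exact ⟨rfl, rfl⟩
      have hZu : HZ z u ≠ 0 := (hZ z u).mpr hadj
      obtain ⟨x1, ha1, hb1, r1⟩ := perp z 1 d (Or.inl rfl) hd u v rfl hvd
      obtain ⟨x2, ha2, hb2, r2⟩ := perp z 1 d' (Or.inl rfl) hd' u w rfl hwd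
      refine glue u x1 x2 hZu hb1 ha1 ha2 hb2 ?_ ?_
      · rw [← div_eq_mul_inv, ← div_eq_mul_inv, div_eq_div_iff hb1 hZu]
        first | linear_combination r1 | linear_combination -r1
      · rw [← div_eq_mul_inv, ← div_eq_mul_inv, div_eq_div_iff ha2 hZw]
        first | linear_combination r2 | linear_combination -r2
  -- build the closed walk in the X Tanner graph
  have adjZ1 : ∀ i : Fin (k+2), torusAdj (cZ i).1 (vZ i).1 := fun i => (hZ _ _).mp (hZ1 i)
  have adjZ2 : ∀ i : Fin (k+2), torusAdj (cZ i).1 (vZ (i+1)).1 := fun i => (hZ _ _).mp (hZ2 i)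
  choose u x1 x2 hA hB hC hD hE using
    fun i : Fin (k+2) => step (cZ i) (vZ i) (vZ (i+1)) (adjZ1 i) (adjZ2 i)
  set vX : ℕ → TorusV n := fun s =>
    if s % 2 = 0 then vZ ((s/2 : ℕ) : Fin (k+2)) else u ((s/2 : ℕ) : Fin (k+2)) with hvX
  set cX : ℕ → TorusCX n := fun s =>
    if s % 2 = 0 then x1 ((s/2 : ℕ) : Fin (k+2)) else x2 ((s/2 : ℕ) : Fin (k+2)) with hcX
  have ev : ∀ t : ℕ, vX (2*t) = vZ ((t : ℕ) : Fin (k+2)) := by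
    intro t
    rw [hvX]; simp only []
    rw [if_pos (by omega : 2*t % 2 = 0), show (2*t)/2 = t from by omega]
  have ou : ∀ t : ℕ, vX (2*t+1) = u ((t : ℕ) : Fin (k+2)) := by
    intro t
    rw [hvX]; simp only []
    rw [if_neg (by omega : ¬ (2*t+1) % 2 = 0), show (2*t+1)/2 = t from by omega]
  have ec : ∀ t : ℕ, cX (2*t) = x1 ((t : ℕ) : Fin (k+2)) := by
    intro t
    rw [hcX]; simp only []
    rw [if_pos (by omega : 2*t % 2 = 0), show (2*t)/2 = t from by omega]
  have oc : ∀ t : ℕ, cX (2*t+1) = x2 ((t : ℕ) : Fin (k+2)) := by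
    intro t
    rw [hcX]; simp only []
    rw [if_neg (by omega : ¬ (2*t+1) % 2 = 0), show (2*t+1)/2 = t from by omega]
  have castsucc : ∀ t : ℕ, ((t+1 : ℕ) : Fin (k+2)) = ((t : ℕ) : Fin (k+2)) + 1 := by
    intro t; push_cast; ring
  have main : ∏ s ∈ Finset.range (2*(k+2)), HX (cX s) (vX (s+1)) * (HX (cX s) (vX s))⁻¹ = 1 := by
    refine walk_prod HX hcyc (2*(k+2)) vX cX ?_ ?_ ?_
    · rw [ev (k+2), show vX 0 = vX (2*0) from by norm_num, ev 0]
      congr 1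
      simp
    · intro t ht
      by_cases h : t % 2 = 0
      · rw [show t = 2*(t/2) from by omega, ev, ec]; exact hA _
      · rw [show t = 2*(t/2)+1 from by omega, ou, oc]; exact hC _
    · intro t ht
      by_cases h : t % 2 = 0
      · rw [show t = 2*(t/2) from by omega, ou, ec]; exact hB _
      · rw [show t = 2*(t/2)+1 from by omega, oc,
          show 2*(t/2)+1+1 = 2*(t/2+1) from by omega, ev, castsucc]
        exact hD _
  have pair : ∀ (g : ℕ → GaloisField 2 m) (M : ℕ), ∏ s ∈ Finset.range (2*M), g s
      = ∏ t ∈ Finset.range M, (g (2*t) * g (2*t+1)) := by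
    intro g M
    induction M with
    | zero => simp
    | succ M ih =>
      rw [show 2*(M+1) = 2*M+1+1 from by omega, Finset.prod_range_succ, Finset.prod_range_succ,
        Finset.prod_range_succ, ih, mul_assoc]
  rw [pair _ (k+2)] at main
  have key : ∏ t ∈ Finset.range (k+2),
      (HZ (cZ ((t : ℕ) : Fin (k+2))) (vZ ((t : ℕ) : Fin (k+2))) *
        (HZ (cZ ((t : ℕ) : Fin (k+2))) (vZ (((t : ℕ) : Fin (k+2)) + 1)))⁻¹) = 1 := by
    rw [← main]
    refine Finset.prod_congr rfl (fun t _ => ?_)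
    rw [show 2*t+1+1 = 2*(t+1) from by omega, ev, ou, ec, oc, ev, castsucc]
    exact (hE _).symm
  have conv : ∏ i : Fin (k+2), (HZ (cZ i) (vZ i) * (HZ (cZ i) (vZ (i+1)))⁻¹) = 1 := by
    rw [← Fin.prod_univ_eq_prod_range
      (fun t : ℕ => HZ (cZ ((t : ℕ) : Fin (k+2))) (vZ ((t : ℕ) : Fin (k+2))) *
        (HZ (cZ ((t : ℕ) : Fin (k+2))) (vZ (((t : ℕ) : Fin (k+2)) + 1)))⁻¹) (k+2)] at key
    rw [← key]
    exact Finset.prod_congr rfl (fun i _ => by rw [Fin.cast_val_eq_self])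
  have final : ∏ i : Fin (k+2), HZ (cZ i) (vZ (i+1)) * (HZ (cZ i) (vZ i))⁻¹
      = (∏ i : Fin (k+2), (HZ (cZ i) (vZ i) * (HZ (cZ i) (vZ (i+1)))⁻¹))⁻¹ := by
    rw [← Finset.prod_inv_distrib]
    exact Finset.prod_congr rfl (fun i _ => by rw [mul_inv, inv_inv, mul_comm])
  rw [final, conv, inv_one]
end

section
/- Let H be a parity-check matrix over F_q whose Tanner graph is connected with every variable node of degree exactly 2, with r check nodes. Remove one check c_r. Then for every remaining check c_0 there exists a vector E ∈ F_q^n whose syndrome (with respect to the matrix with row c_r deleted) is the standard basis vector supported at c_0; consequently the r−1 remaining rows of H are linearly independent and rank(H) ≥ r − 1. -/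
open Matrix Finset

set_option linter.unusedSectionVars false

section Aux

variable {F V Chk : Type*} [Field F] [Fintype V] [DecidableEq V] [Fintype Chk] [DecidableEq Chk]

lemma mulVec_indicator (H : Matrix Chk V F) (v : V) (t : F) (c : Chk) :
    H.mulVec (fun w => if w = v then t else 0) c = H c v * t := by
  classical
  simp [Matrix.mulVec, dotProduct, mul_ite]

lemma syndrome_exists
    (ch1 ch2 : V → Chk) (hch : ∀ v, ch1 v ≠ ch2 v)
    (H : Matrix Chk V F)
    (hsupp : ∀ c v, H c v ≠ 0 ↔ (c = ch1 v ∨ c = ch2 v))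
    (cr : Chk) (c0 : Chk)
    (hpath : Relation.ReflTransGen
      (fun a b => ∃ v, (ch1 v = a ∧ ch2 v = b) ∨ (ch1 v = b ∧ ch2 v = a)) c0 cr) :
    c0 = cr ∨ ∃ E : V → F,
      ∀ c : Chk, c ≠ cr → H.mulVec E c = if c = c0 then 1 else 0 := by
  classical
  induction hpath using Relation.ReflTransGen.head_induction_on with
  | refl => exact Or.inl rfl
  | head hedge _ ih =>
    rename_i a b _
    right
    obtain ⟨v, hv⟩ := hedge
    -- properties of v : adjacent to a and b
    have hHa : H a v ≠ 0 := by
      rw [hsupp]; rcases hv with ⟨h1, _⟩ | ⟨_, h2⟩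
      · exact Or.inl h1.symm
      · exact Or.inr h2.symm
    have hHb : H b v ≠ 0 := by
      rw [hsupp]; rcases hv with ⟨_, h2⟩ | ⟨h1, _⟩
      · exact Or.inr h2.symm
      · exact Or.inl h1.symm
    have hzero : ∀ c : Chk, c ≠ a → c ≠ b → H c v = 0 := by
      intro c hca hcb
      by_contra h
      rcases (hsupp c v).mp h with h1 | h2
      · rcases hv with ⟨h', _⟩ | ⟨h', _⟩
        · exact hca (h1.trans h')
        · exact hcb (h1.trans h')
      · rcases hv with ⟨_, h'⟩ | ⟨_, h'⟩
        · exact hcb (h2.trans h')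
        · exact hca (h2.trans h')
    have hab : a ≠ b := by
      rcases hv with ⟨h1, h2⟩ | ⟨h1, h2⟩
      · rw [← h1, ← h2]; exact hch v
      · rw [← h1, ← h2]; exact fun h => hch v h.symm
    by_cases hbcr : b = cr
    · -- neighbor is the removed check
      refine ⟨fun w => if w = v then (H a v)⁻¹ else 0, fun c hc => ?_⟩
      rw [mulVec_indicator]
      by_cases hca : c = a
      · subst hca; simp [mul_inv_cancel₀ hHa]
      · rw [hzero c hca (by rw [hbcr]; exact hc), if_neg hca, zero_mul]
    · obtain ⟨E1, hE1⟩ := ih.resolve_left hbcr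
      set α : F := H b v * (H a v)⁻¹ with hα
      refine ⟨fun w => (if w = v then (H a v)⁻¹ else 0) - α * E1 w, fun c hc => ?_⟩
      have : H.mulVec (fun w => (if w = v then (H a v)⁻¹ else 0) - α * E1 w) c
          = H.mulVec (fun w => if w = v then (H a v)⁻¹ else 0) c - α * H.mulVec E1 c := by
        simp [Matrix.mulVec, dotProduct, mul_sub, Finset.sum_sub_distrib, Finset.mul_sum,
          mul_left_comm]
      rw [this, mulVec_indicator, hE1 c hc]
      by_cases hca : c = a
      · subst hca
        rw [if_neg hab, if_pos rfl, mul_zero, sub_zero, mul_inv_cancel₀ hHa]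
      · rw [if_neg hca]
        by_cases hcb : c = b
        · subst hcb; simp [hα]
        · rw [hzero c hca hcb, if_neg hcb, zero_mul, mul_zero, sub_zero]

end Aux

/-- **Removing one check: syndrome realization and rank lower bound.**
Let `H` be a parity-check matrix over `F_q` whose Tanner graph is connected (between
any two checks there is a path through variable nodes) and in which every variable
node `v` has degree exactly 2, with adjacent checks `ch1 v ≠ ch2 v`.  Remove one
check `c_r`.  Then for every remaining check `c₀ ≠ c_r` there is a vector `E ∈ F_q^n`
whose syndrome with respect to the matrix with row `c_r` deleted is the standard
basis vector supported at `c₀`; consequently the remaining rows of `H` are linearly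
independent and `rank H ≥ #checks − 1`. -/
theorem remove_check_syndromes_and_rank
    {F V Chk : Type*} [Field F] [Fintype V] [Fintype Chk] [DecidableEq Chk]
    (ch1 ch2 : V → Chk) (hch : ∀ v, ch1 v ≠ ch2 v)
    (H : Matrix Chk V F)
    (hsupp : ∀ c v, H c v ≠ 0 ↔ (c = ch1 v ∨ c = ch2 v))
    (hconn : ∀ a b : Chk, Relation.ReflTransGen
      (fun a b => ∃ v, (ch1 v = a ∧ ch2 v = b) ∨ (ch1 v = b ∧ ch2 v = a)) a b)
    (cr : Chk) :
    (∀ c0 : Chk, c0 ≠ cr → ∃ E : V → F,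
        ∀ c : Chk, c ≠ cr → H.mulVec E c = if c = c0 then 1 else 0) ∧
      LinearIndependent F (fun c : {c : Chk // c ≠ cr} => H c.val) ∧
      Fintype.card Chk - 1 ≤ H.rank := by
  classical
  have hsyn : ∀ c0 : Chk, c0 ≠ cr → ∃ E : V → F,
      ∀ c : Chk, c ≠ cr → H.mulVec E c = if c = c0 then 1 else 0 := by
    intro c0 hc0
    exact (syndrome_exists ch1 ch2 hch H hsupp cr c0 (hconn c0 cr)).resolve_left hc0
  have hli : LinearIndependent F (fun c : {c : Chk // c ≠ cr} => H c.val) := by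
    rw [Fintype.linearIndependent_iff]
    intro g hg c0
    obtain ⟨E, hE⟩ := hsyn c0.val c0.2
    have h0 : (∑ c : {c : Chk // c ≠ cr}, g c • H c.val) ⬝ᵥ E = 0 := by
      rw [hg]; simp
    have h1 : (∑ c : {c : Chk // c ≠ cr}, g c • H c.val) ⬝ᵥ E
        = ∑ c : {c : Chk // c ≠ cr}, g c * H.mulVec E c.val := by
      simp only [Matrix.mulVec, dotProduct, Finset.sum_apply, Pi.smul_apply, smul_eq_mul,
        Finset.sum_mul, Finset.mul_sum, mul_assoc]
      rw [Finset.sum_comm]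
    rw [h1] at h0
    have h2 : ∀ c : {c : Chk // c ≠ cr},
        g c * H.mulVec E c.val = if c = c0 then g c else 0 := by
      intro c
      rw [hE c.val c.2]
      by_cases h : c = c0
      · subst h; simp
      · rw [if_neg (fun he => h (Subtype.ext he)), if_neg h, mul_zero]
    rw [Finset.sum_congr rfl (fun c _ => h2 c), Finset.sum_ite_eq' _ c0] at h0
    simpa using h0
  refine ⟨hsyn, hli, ?_⟩
  have hcard : Fintype.card {c : Chk // c ≠ cr} = Fintype.card Chk - 1 := by
    simp [Fintype.card_subtype_compl]
  rw [Matrix.rank_eq_finrank_span_row, ← hcard]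
  have hspan : Submodule.span F (Set.range (fun c : {c : Chk // c ≠ cr} => H c.val))
      ≤ Submodule.span F (Set.range H) :=
    Submodule.span_mono (Set.range_comp_subset_range _ _)
  calc Fintype.card {c : Chk // c ≠ cr}
      = Module.finrank F (Submodule.span F
          (Set.range (fun c : {c : Chk // c ≠ cr} => H c.val))) :=
        (finrank_span_eq_card hli).symm
    _ ≤ Module.finrank F (Submodule.span F (Set.range H)) :=
        Submodule.finrank_mono hspan
end

section
/- In the q-ary toric code with cycle products equal to 1 in both Tanner graphs, let X̄_1 ∈ C_Z^{(q)} be a codeword supported on a vertical big cycle and Z̄_1 ∈ C_X^{(q)} a codeword supported on a horizontal big cycle. Then X̄_1 Z̄_1^T ≠ 0, and consequently X̄_1 ∉ (C_X^{(q)})^⊥. -/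
open Matrix Module Finset BigOperators

/-- **Big-cycle codewords pair nontrivially.**
In the `q`-ary toric code (`q = 2^m`, `n ≥ 2`) with cycle products equal to `1` in
both Tanner graphs, let `X̄₁ ∈ C_Z^{(q)} = ker H_Z^{(q)}` be a codeword supported
exactly on a vertical big cycle (the variable nodes of the column `a`, with `a`
even), nonzero everywhere on this support, and let `Z̄₁ ∈ C_X^{(q)} = ker H_X^{(q)}`
be a codeword supported exactly on a horizontal big cycle (the variable nodes of the
row `b`, with `b` even), nonzero everywhere on its support.  Then the inner product
`X̄₁ Z̄₁ᵀ` is nonzero (the supports meet in exactly one variable node), and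
consequently `X̄₁ ∉ (C_X^{(q)})^⊥`. -/
theorem big_cycle_pairing (n m : ℕ) [NeZero (2*n)] (hn : 2 ≤ n) (hm : 0 < m)
    (HX : Matrix (TorusCX n) (TorusV n) (GaloisField 2 m))
    (HZ : Matrix (TorusCZ n) (TorusV n) (GaloisField 2 m))
    (hX : ∀ c v, HX c v ≠ 0 ↔ torusAdj c.1 v.1)
    (hZ : ∀ c v, HZ c v ≠ 0 ↔ torusAdj c.1 v.1)
    (horth : HX * HZᵀ = 0)
    (hcycX : CycleProdOne HX) (hcycZ : CycleProdOne HZ)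
    (a b : ZMod (2*n)) (ha : a.val % 2 = 0) (hb : b.val % 2 = 0)
    (X1 Z1 : TorusV n → GaloisField 2 m)
    (hX1mem : X1 ∈ LinearMap.ker HZ.mulVecLin)
    (hX1supp : ∀ v : TorusV n, X1 v ≠ 0 ↔ v.1.1 = a)
    (hZ1mem : Z1 ∈ LinearMap.ker HX.mulVecLin)
    (hZ1supp : ∀ v : TorusV n, Z1 v ≠ 0 ↔ v.1.2 = b) :
    (∑ v, X1 v * Z1 v) ≠ 0 ∧ X1 ∉ dualCode (LinearMap.ker HX.mulVecLin) := by
  have hv0 : ((a, b).1.val + (a, b).2.val) % 2 = 0 := by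
    rw [Nat.add_mod, ha, hb]
  set v0 : TorusV n := ⟨(a, b), hv0⟩ with hv0def
  have hsum : (∑ v, X1 v * Z1 v) = X1 v0 * Z1 v0 := by
    apply Finset.sum_eq_single_of_mem v0 (Finset.mem_univ _)
    intro v _ hv
    by_contra h
    have h1 : X1 v ≠ 0 := fun h' => h (by rw [h', zero_mul])
    have h2 : Z1 v ≠ 0 := fun h' => h (by rw [h', mul_zero])
    exact hv (Subtype.ext (Prod.ext ((hX1supp v).mp h1) ((hZ1supp v).mp h2)))
  have hne : X1 v0 * Z1 v0 ≠ 0 :=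
    mul_ne_zero ((hX1supp v0).mpr rfl) ((hZ1supp v0).mpr rfl)
  refine ⟨by rw [hsum]; exact hne, fun hmem => ?_⟩
  have h0 : ∑ i, Z1 i * X1 i = 0 := hmem Z1 hZ1mem
  rw [show (∑ i, Z1 i * X1 i) = ∑ v, X1 v * Z1 v from
    Finset.sum_congr rfl (fun i _ => mul_comm _ _), hsum] at h0
  exact hne h0
end

section
/- Let E = α_1 X̄_1 + α_2 X̄_2 + E_s with E_s ∈ (C_X^{(q)})^⊥, α_1, α_2 ∈ F_q not both zero, where X̄_1, X̄_2 are the big-cycle codewords of the q-ary toric code. Then the Hamming weight of E is at least n. -/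
open Matrix Module Finset BigOperators
open Fin.NatCast

private def cycF {F C V : Type*} [Field F] {n : ℕ} [NeZero n]
    (H : Matrix C V F) (v : Fin n → V) (c : Fin n → C) : ℕ → F
  | 0 => 1
  | (t+1) => cycF H v c t * H (c (t : Fin n)) (v (t : Fin n)) * (H (c (t : Fin n)) (v ((t : Fin n) + 1)))⁻¹

private lemma cycF_ne_zero {F C V : Type*} [Field F] {n : ℕ} [NeZero n]
    (H : Matrix C V F) (v : Fin n → V) (c : Fin n → C)
    (hadj1 : ∀ i, H (c i) (v i) ≠ 0) (hadj2 : ∀ i, H (c i) (v (i + 1)) ≠ 0) :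
    ∀ t, cycF H v c t ≠ 0 := by
  intro t
  induction t with
  | zero => simp [cycF]
  | succ t ih =>
    simp only [cycF]
    exact mul_ne_zero (mul_ne_zero ih (hadj1 _)) (inv_ne_zero (hadj2 _))

private lemma cycF_step {F C V : Type*} [Field F] {n : ℕ} [NeZero n]
    (H : Matrix C V F) (v : Fin n → V) (c : Fin n → C)
    (hadj2 : ∀ i, H (c i) (v (i + 1)) ≠ 0) (t : ℕ) :
    H (c (t : Fin n)) (v ((t : Fin n) + 1)) * cycF H v c (t+1)
      = H (c (t : Fin n)) (v (t : Fin n)) * cycF H v c t := by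
  simp only [cycF]
  rw [mul_comm (H (c (t : Fin n)) (v ((t : Fin n) + 1)))]
  rw [mul_assoc, inv_mul_cancel₀ (hadj2 _), mul_one]
  exact mul_comm _ _

private lemma cycF_prod {F C V : Type*} [Field F] {n : ℕ} [NeZero n]
    (H : Matrix C V F) (v : Fin n → V) (c : Fin n → C) (t : ℕ) :
    cycF H v c t = ∏ s ∈ Finset.range t,
      (H (c (s : Fin n)) (v (s : Fin n)) * (H (c (s : Fin n)) (v ((s : Fin n) + 1)))⁻¹) := by
  induction t with
  | zero => simp [cycF]
  | succ t ih => rw [Finset.prod_range_succ, ← ih]; simp only [cycF]; ring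

private lemma cycF_top {F C V : Type*} [Field F] {k : ℕ}
    (H : Matrix C V F) (v : Fin (k+2) → V) (c : Fin (k+2) → C)
    (hv : Function.Injective v) (hc : Function.Injective c)
    (hadj1 : ∀ i, H (c i) (v i) ≠ 0) (hadj2 : ∀ i, H (c i) (v (i + 1)) ≠ 0)
    (hcyc : CycleProdOne H) :
    cycF H v c (k+2) = 1 := by
  have h := hcyc k v c hv hc hadj1 hadj2
  rw [cycF_prod]
  have h2 : ∏ i : Fin (k+2), (H (c i) (v i) * (H (c i) (v (i+1)))⁻¹) = 1 := by
    rw [← inv_eq_one.mpr h, ← Finset.prod_inv_distrib]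
    exact Finset.prod_congr rfl fun i _ => by
      rw [mul_inv, inv_inv, mul_comm]
  rw [← h2, ← Fin.prod_univ_eq_prod_range
    (fun s => H (c (s : Fin (k+2))) (v (s : Fin (k+2))) * (H (c (s : Fin (k+2))) (v ((s : Fin (k+2)) + 1)))⁻¹)]
  exact Finset.prod_congr rfl fun i _ => by rw [Fin.cast_val_eq_self]

lemma exists_cycle_codeword {F C V : Type*} [Field F] [Fintype V] [DecidableEq V]
    (H : Matrix C V F) (h2 : ∀ x : F, x + x = 0) (hcyc : CycleProdOne H)
    (k : ℕ) (v : Fin (k+2) → V) (c : Fin (k+2) → C)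
    (hv : Function.Injective v) (hc : Function.Injective c)
    (hadj1 : ∀ i, H (c i) (v i) ≠ 0) (hadj2 : ∀ i, H (c i) (v (i + 1)) ≠ 0)
    (hadj3 : ∀ i j, H (c i) (v j) ≠ 0 → j = i ∨ j = i + 1)
    (hother : ∀ d j, H d (v j) ≠ 0 → ∃ i, d = c i) :
    ∃ Z : V → F, H.mulVec Z = 0 ∧ (∀ i, Z (v i) ≠ 0) ∧
      (∀ x, Z x ≠ 0 → ∃ i, x = v i) := by
  classical
  have h1 : (1 : Fin (k+2)).val = 1 := by
    rw [Fin.val_one']; exact Nat.mod_eq_of_lt (by omega)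
  set Z : V → F := fun x => if h : ∃ i, v i = x then cycF H v c (h.choose).val else 0 with hZdef
  have hZv : ∀ i : Fin (k+2), Z (v i) = cycF H v c i.val := by
    intro i
    have hex : ∃ j, v j = v i := ⟨i, rfl⟩
    show (if h : ∃ j, v j = v i then cycF H v c (h.choose).val else 0) = _
    rw [dif_pos hex]
    congr 1
    exact congrArg Fin.val (hv hex.choose_spec)
  have hZoutside : ∀ x, (¬ ∃ i, v i = x) → Z x = 0 := by
    intro x hx
    show (if h : ∃ j, v j = x then cycF H v c (h.choose).val else 0) = 0
    rw [dif_neg hx]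
  refine ⟨Z, ?_, ?_, ?_⟩
  · funext d
    show ∑ x, H d x * Z x = 0
    have hsum : ∑ x, H d x * Z x = ∑ i : Fin (k+2), H d (v i) * Z (v i) := by
      rw [← Finset.sum_image (g := v) (f := fun x => H d x * Z x)
        (by intro p _ q _ hpq; exact hv hpq)]
      symm
      apply Finset.sum_subset (Finset.subset_univ _)
      intro x _ hx
      have hzx : Z x = 0 := by
        apply hZoutside
        intro ⟨i, hi⟩
        exact hx (Finset.mem_image.mpr ⟨i, Finset.mem_univ i, hi⟩)
      rw [hzx, mul_zero]
    rw [hsum]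
    by_cases hd : ∃ i, d = c i
    · obtain ⟨i, rfl⟩ := hd
      have hne : i ≠ i + 1 := by
        intro h
        have hval := congrArg Fin.val h
        rw [Fin.val_add, h1] at hval
        have hlt := i.isLt
        rcases lt_or_ge (i.val + 1) (k+2) with h' | h'
        · rw [Nat.mod_eq_of_lt h'] at hval; omega
        · have : i.val + 1 = k + 2 := by omega
          rw [this, Nat.mod_self] at hval; omega
      have hsplit : ∑ j : Fin (k+2), H (c i) (v j) * Z (v j)
          = H (c i) (v i) * Z (v i) + H (c i) (v (i+1)) * Z (v (i+1)) := by
        rw [show H (c i) (v i) * Z (v i) + H (c i) (v (i+1)) * Z (v (i+1))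
            = ∑ j ∈ ({i, i+1} : Finset (Fin (k+2))), H (c i) (v j) * Z (v j)
          from (Finset.sum_pair (f := fun j => H (c i) (v j) * Z (v j)) hne).symm]
        symm
        apply Finset.sum_subset (Finset.subset_univ _)
        intro j _ hj
        rcases eq_or_ne (H (c i) (v j)) 0 with h0 | h0
        · rw [h0, zero_mul]
        · rcases hadj3 i j h0 with rfl | rfl
          · exact absurd (Finset.mem_insert_self _ _) hj
          · exact absurd (Finset.mem_insert_of_mem (Finset.mem_singleton_self _)) hj
      rw [hsplit, hZv, hZv]
      have hval1 : cycF H v c (i+1).val = cycF H v c (i.val + 1) := by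
        rcases lt_or_ge (i.val + 1) (k+2) with hlt | hge
        · congr 1
          rw [Fin.val_add, h1]
          exact Nat.mod_eq_of_lt hlt
        · have hiv : i.val + 1 = k + 2 := by have := i.isLt; omega
          have hv0 : (i+1).val = 0 := by
            rw [Fin.val_add, h1, hiv, Nat.mod_self]
          rw [hv0, hiv]
          rw [cycF_top H v c hv hc hadj1 hadj2 hcyc]
          simp [cycF]
      have heq : H (c i) (v (i+1)) * cycF H v c (i+1).val
          = H (c i) (v i) * cycF H v c i.val := by
        rw [hval1]
        have hs := cycF_step H v c hadj2 i.val
        rw [Fin.cast_val_eq_self] at hs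
        exact hs
      rw [heq]
      exact h2 _
    · push_neg at hd
      apply Finset.sum_eq_zero
      intro j _
      rcases eq_or_ne (H d (v j)) 0 with h0 | h0
      · rw [h0, zero_mul]
      · obtain ⟨i, hi⟩ := hother d j h0
        exact absurd hi (hd i)
  · intro i
    rw [hZv]
    exact cycF_ne_zero H v c hadj1 hadj2 _
  · intro x hx
    by_contra hno
    push_neg at hno
    have hne : ¬ ∃ i, v i = x := fun ⟨i, hi⟩ => hno i hi.symm
    exact hx (hZoutside x hne)

section helpers
set_option linter.unusedSectionVars false
variable {n : ℕ} [NeZero (2*n)]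

lemma tor_cast_parity (x : ℕ) : ((x : ZMod (2*n))).val % 2 = x % 2 := by
  rw [ZMod.val_natCast]; exact Nat.mod_mod_of_dvd x ⟨n, rfl⟩

lemma tor_cast_val_self (x : ZMod (2*n)) : ((x.val : ℕ) : ZMod (2*n)) = x := by
  simp [ZMod.natCast_val, ZMod.cast_id]

lemma tor_cast_mod (x : ℕ) :
    ((2 * (x % n) : ℕ) : ZMod (2*n)) = ((2 * x : ℕ) : ZMod (2*n)) := by
  have h := Nat.div_add_mod x n
  have he : 2 * x = 2 * (x % n) + (2*n) * (x / n) := by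
    calc 2*x = 2*(n*(x/n) + x % n) := by rw [h]
    _ = 2*(x%n) + (2*n)*(x/n) := by ring
  symm
  calc ((2 * x : ℕ) : ZMod (2*n))
      = ((2 * (x % n) : ℕ) : ZMod (2*n)) + ((2*n : ℕ) : ZMod (2*n)) * ((x/n : ℕ) : ZMod (2*n)) := by
        rw [he]; push_cast; ring
    _ = ((2 * (x % n) : ℕ) : ZMod (2*n)) := by rw [ZMod.natCast_self]; ring

lemma tor_cast_inj {x y : ℕ} (hx : x < 2*n) (hy : y < 2*n)
    (h : (x : ZMod (2*n)) = (y : ZMod (2*n))) : x = y := by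
  have := congrArg ZMod.val h
  rwa [ZMod.val_natCast_of_lt hx, ZMod.val_natCast_of_lt hy] at this

lemma fin_val_one [NeZero n] (h2 : 2 ≤ n) : (1 : Fin n).val = 1 := by
  rw [Fin.val_one']; exact Nat.mod_eq_of_lt (by omega)

lemma fin_add_one [NeZero n] (h2 : 2 ≤ n) (t : Fin n) : (t + 1).val = (t.val + 1) % n := by
  rw [Fin.val_add, fin_val_one h2]

lemma fin_sub_one [NeZero n] (h2 : 2 ≤ n) (s : Fin n) :
    (s - 1).val + 1 = s.val ∨ ((s - 1).val = n - 1 ∧ s.val = 0) := by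
  have hs : ((s - 1) + 1) = s := by exact sub_add_cancel s 1
  have hval := congrArg Fin.val hs
  rw [fin_add_one h2] at hval
  have hlt := (s-1).isLt
  rcases lt_or_ge ((s-1).val + 1) n with h' | h'
  · left; rwa [Nat.mod_eq_of_lt h'] at hval
  · right
    have he : (s-1).val + 1 = n := by omega
    rw [he, Nat.mod_self] at hval
    omega

end helpers
lemma tor_cast_mod' {n : ℕ} [NeZero (2*n)] (x r : ℕ) :
    ((2 * (x % n) + r : ℕ) : ZMod (2*n)) = ((2 * x + r : ℕ) : ZMod (2*n)) := by
  have h := tor_cast_mod (n := n) x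
  push_cast at h ⊢
  linear_combination h

lemma row_codeword {n : ℕ} [NeZero (2*n)] (hn : 2 ≤ n) {F : Type*} [Field F]
    (HX : Matrix (TorusCX n) (TorusV n) F)
    (hX : ∀ c v, HX c v ≠ 0 ↔ torusAdj c.1 v.1)
    (hcycX : CycleProdOne HX) (h2 : ∀ x : F, x + x = 0) (k : Fin n) :
    ∃ Z : TorusV n → F, HX.mulVec Z = 0 ∧
      (∀ x : TorusV n, Z x ≠ 0 ↔ x.1.2 = ((2 * k.val : ℕ) : ZMod (2*n))) := by
  haveI : NeZero n := ⟨by omega⟩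
  obtain ⟨K, rfl⟩ : ∃ K, n = K + 2 := ⟨n - 2, by omega⟩
  have hJpar : (((2 * k.val : ℕ) : ZMod (2*(K+2)))).val % 2 = 0 := by
    rw [tor_cast_parity]; omega
  set J : ZMod (2*(K+2)) := ((2 * k.val : ℕ) : ZMod (2*(K+2))) with hJ
  have vvmem : ∀ t : Fin (K+2),
      ((((2 * t.val : ℕ) : ZMod (2*(K+2))), J).1.val + (((2 * t.val : ℕ) : ZMod (2*(K+2))), J).2.val) % 2 = 0 := by
    intro t
    have h1 : (((2 * t.val : ℕ) : ZMod (2*(K+2)))).val % 2 = 0 := by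
      rw [tor_cast_parity]; omega
    simp only
    omega
  set vv : Fin (K+2) → TorusV (K+2) := fun t =>
    ⟨(((2 * t.val : ℕ) : ZMod (2*(K+2))), J), vvmem t⟩ with hvv
  set cc : Fin (K+2) → TorusCX (K+2) := fun t =>
    ⟨(((2 * t.val + 1 : ℕ) : ZMod (2*(K+2))), J), by
      refine ⟨?_, hJpar⟩
      rw [tor_cast_parity]; omega⟩ with hcc
  have hv : Function.Injective vv := by
    intro s t h
    have h1 := congrArg (fun w => w.1.1) h
    simp only [hvv] at h1
    have := tor_cast_inj (by have := s.isLt; omega) (by have := t.isLt; omega) h1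
    exact Fin.ext (by omega)
  have hc : Function.Injective cc := by
    intro s t h
    have h1 := congrArg (fun w => w.1.1) h
    simp only [hcc] at h1
    have := tor_cast_inj (by have := s.isLt; omega) (by have := t.isLt; omega) h1
    exact Fin.ext (by omega)
  have hadj1 : ∀ t, HX (cc t) (vv t) ≠ 0 := by
    intro t
    rw [hX]
    right; left
    refine ⟨?_, rfl⟩
    show ((2 * t.val : ℕ) : ZMod (2*(K+2))) = ((2 * t.val + 1 : ℕ) : ZMod (2*(K+2))) - 1
    push_cast; ring
  have hadj2 : ∀ t, HX (cc t) (vv (t + 1)) ≠ 0 := by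
    intro t
    rw [hX]
    left
    refine ⟨?_, rfl⟩
    show ((2 * (t+1).val : ℕ) : ZMod (2*(K+2))) = ((2 * t.val + 1 : ℕ) : ZMod (2*(K+2))) + 1
    rw [fin_add_one (by omega)]
    rw [show ((2 * ((t.val + 1) % (K+2)) : ℕ) : ZMod (2*(K+2))) = ((2 * (t.val+1) : ℕ) : ZMod (2*(K+2))) from tor_cast_mod _]
    push_cast; ring
  have hadj3 : ∀ i j, HX (cc i) (vv j) ≠ 0 → j = i ∨ j = i + 1 := by
    intro i j h0
    rw [hX] at h0
    rcases h0 with ⟨e1, _⟩ | ⟨e1, _⟩ | ⟨e1, _⟩ | ⟨e1, _⟩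
    · -- v.1 = c.1 + 1 : j = i + 1
      right
      have e1' : ((2 * j.val : ℕ) : ZMod (2*(K+2))) = ((2 * (i.val + 1) : ℕ) : ZMod (2*(K+2))) := by
        have e1 : ((2 * j.val : ℕ) : ZMod (2*(K+2))) = ((2 * i.val + 1 : ℕ) : ZMod (2*(K+2))) + 1 := e1
        push_cast at e1 ⊢; linear_combination e1
      rw [← tor_cast_mod (n := K+2) (i.val+1)] at e1'
      have := tor_cast_inj (by have := j.isLt; omega)
        (by have := Nat.mod_lt (i.val+1) (show 0 < K+2 by omega); omega) e1'
      apply Fin.ext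
      rw [fin_add_one (by omega)]
      omega
    · -- v.1 = c.1 - 1 : j = i
      left
      have e1' : ((2 * j.val : ℕ) : ZMod (2*(K+2))) = ((2 * i.val : ℕ) : ZMod (2*(K+2))) := by
        have e1 : ((2 * j.val : ℕ) : ZMod (2*(K+2))) = ((2 * i.val + 1 : ℕ) : ZMod (2*(K+2))) - 1 := e1
        push_cast at e1 ⊢; linear_combination e1
      have := tor_cast_inj (by have := j.isLt; omega) (by have := i.isLt; omega) e1'
      exact Fin.ext (by omega)
    · -- v.1 = c.1 : parity contradiction
      exfalso
      have p1 := tor_cast_parity (n := K+2) (2*j.val)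
      have p2 := tor_cast_parity (n := K+2) (2*i.val+1)
      rw [show ((2*j.val : ℕ) : ZMod (2*(K+2))) = ((2*i.val+1 : ℕ) : ZMod (2*(K+2))) from e1] at p1
      omega
    · exfalso
      have p1 := tor_cast_parity (n := K+2) (2*j.val)
      have p2 := tor_cast_parity (n := K+2) (2*i.val+1)
      rw [show ((2*j.val : ℕ) : ZMod (2*(K+2))) = ((2*i.val+1 : ℕ) : ZMod (2*(K+2))) from e1] at p1
      omega
  have hother : ∀ d j, HX d (vv j) ≠ 0 → ∃ i, d = cc i := by
    intro d j h0
    rw [hX] at h0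
    obtain ⟨hd1, hd2⟩ := d.2
    rcases h0 with ⟨e1, e2⟩ | ⟨e1, e2⟩ | ⟨e1, e2⟩ | ⟨e1, e2⟩
    · -- ↑(2j) = d.1.1 + 1 : d = cc (j-1)
      refine ⟨j - 1, ?_⟩
      have key : ((2 * (j-1).val + 1 : ℕ) : ZMod (2*(K+2))) + 1 = ((2 * j.val : ℕ) : ZMod (2*(K+2))) := by
        rcases fin_sub_one (by omega) j with h | ⟨h1, h0'⟩
        · rw [← h]; push_cast; ring
        · rw [h1, h0']
          have e3 : (2*(K+2-1)+1)+1 = 2*(K+2) := by omega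
          calc ((2*(K+2-1)+1 : ℕ) : ZMod (2*(K+2))) + 1 = (((2*(K+2-1)+1)+1 : ℕ) : ZMod (2*(K+2))) := by push_cast; ring
            _ = ((2*(K+2) : ℕ) : ZMod (2*(K+2))) := by rw [e3]
            _ = 0 := ZMod.natCast_self _
            _ = ((2*(0:ℕ) : ℕ) : ZMod (2*(K+2))) := by norm_num
      apply Subtype.ext
      apply Prod.ext
      · show d.1.1 = ((2 * (j-1).val + 1 : ℕ) : ZMod (2*(K+2)))
        have h4 : d.1.1 + 1 = ((2 * (j-1).val + 1 : ℕ) : ZMod (2*(K+2))) + 1 := by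
          rw [key, ← e1]
        exact add_right_cancel h4
      · exact e2.symm
    · -- ↑(2j) = d.1.1 - 1 : d = cc j
      refine ⟨j, ?_⟩
      apply Subtype.ext
      apply Prod.ext
      · show d.1.1 = ((2 * j.val + 1 : ℕ) : ZMod (2*(K+2)))
        have e1' : ((2 * j.val : ℕ) : ZMod (2*(K+2))) = d.1.1 - 1 := e1
        push_cast at e1' ⊢
        linear_combination -e1'
      · exact e2.symm
    · exfalso
      have p1 := tor_cast_parity (n := K+2) (2*j.val)
      rw [show ((2*j.val : ℕ) : ZMod (2*(K+2))) = d.1.1 from e1] at p1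
      omega
    · exfalso
      have p1 := tor_cast_parity (n := K+2) (2*j.val)
      rw [show ((2*j.val : ℕ) : ZMod (2*(K+2))) = d.1.1 from e1] at p1
      omega
  obtain ⟨Z, hZ0, hZne, hZsupp⟩ :=
    exists_cycle_codeword HX h2 hcycX K vv cc hv hc hadj1 hadj2 hadj3 hother
  refine ⟨Z, hZ0, fun x => ⟨fun hx => ?_, fun hx => ?_⟩⟩
  · obtain ⟨i, rfl⟩ := hZsupp x hx
    rfl
  · have hJv : x.1.2.val % 2 = 0 := by rw [hx]; exact hJpar
    have hpar1 : x.1.1.val % 2 = 0 := by have := x.2; omega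
    have hlt := ZMod.val_lt x.1.1
    have hx1 : x = vv ⟨x.1.1.val / 2, by omega⟩ := by
      apply Subtype.ext
      apply Prod.ext
      · show x.1.1 = ((2 * (x.1.1.val / 2) : ℕ) : ZMod (2*(K+2)))
        rw [show 2 * (x.1.1.val/2) = x.1.1.val from by omega]
        exact (tor_cast_val_self _).symm
      · exact hx
    rw [hx1]
    exact hZne _

lemma col_codeword {n : ℕ} [NeZero (2*n)] (hn : 2 ≤ n) {F : Type*} [Field F]
    (HX : Matrix (TorusCX n) (TorusV n) F)
    (hX : ∀ c v, HX c v ≠ 0 ↔ torusAdj c.1 v.1)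
    (hcycX : CycleProdOne HX) (h2 : ∀ x : F, x + x = 0) (k : Fin n) :
    ∃ Z : TorusV n → F, HX.mulVec Z = 0 ∧
      (∀ x : TorusV n, Z x ≠ 0 ↔ x.1.1 = ((2 * k.val + 1 : ℕ) : ZMod (2*n))) := by
  haveI : NeZero n := ⟨by omega⟩
  obtain ⟨K, rfl⟩ : ∃ K, n = K + 2 := ⟨n - 2, by omega⟩
  have hJpar : (((2 * k.val + 1 : ℕ) : ZMod (2*(K+2)))).val % 2 = 1 := by
    rw [tor_cast_parity]; omega
  set J : ZMod (2*(K+2)) := ((2 * k.val + 1 : ℕ) : ZMod (2*(K+2))) with hJ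
  set vv : Fin (K+2) → TorusV (K+2) := fun t =>
    ⟨(J, ((2 * t.val + 1 : ℕ) : ZMod (2*(K+2)))), by
      have h1 : (((2 * t.val + 1 : ℕ) : ZMod (2*(K+2)))).val % 2 = 1 := by
        rw [tor_cast_parity]; omega
      simp only
      omega⟩ with hvv
  set cc : Fin (K+2) → TorusCX (K+2) := fun t =>
    ⟨(J, ((2 * t.val + 2 : ℕ) : ZMod (2*(K+2)))), by
      refine ⟨hJpar, ?_⟩
      rw [tor_cast_parity]; omega⟩ with hcc
  have hv : Function.Injective vv := by
    intro s t h
    have h1 : ((2*s.val+1 : ℕ) : ZMod (2*(K+2))) = ((2*t.val+1 : ℕ) : ZMod (2*(K+2))) :=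
      congrArg (fun w => w.1.2) h
    have hbs : 2*s.val+1 < 2*(K+2) := by have := s.isLt; omega
    have hbt : 2*t.val+1 < 2*(K+2) := by have := t.isLt; omega
    have := tor_cast_inj (n := K+2) hbs hbt h1
    exact Fin.ext (by omega)
  have hc : Function.Injective cc := by
    intro s t h
    have h1 : ((2*s.val+2 : ℕ) : ZMod (2*(K+2))) = ((2*t.val+2 : ℕ) : ZMod (2*(K+2))) :=
      congrArg (fun w => w.1.2) h
    have h1' : ((2*s.val : ℕ) : ZMod (2*(K+2))) = ((2*t.val : ℕ) : ZMod (2*(K+2))) := by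
      push_cast at h1 ⊢
      linear_combination h1
    have hbs : 2*s.val < 2*(K+2) := by have := s.isLt; omega
    have hbt : 2*t.val < 2*(K+2) := by have := t.isLt; omega
    have := tor_cast_inj (n := K+2) hbs hbt h1'
    exact Fin.ext (by omega)
  have hadj1 : ∀ t, HX (cc t) (vv t) ≠ 0 := by
    intro t
    rw [hX]
    right; right; right
    refine ⟨rfl, ?_⟩
    show ((2 * t.val + 1 : ℕ) : ZMod (2*(K+2))) = ((2 * t.val + 2 : ℕ) : ZMod (2*(K+2))) - 1
    push_cast; ring
  have hadj2 : ∀ t, HX (cc t) (vv (t + 1)) ≠ 0 := by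
    intro t
    rw [hX]
    right; right; left
    refine ⟨rfl, ?_⟩
    show ((2 * (t+1).val + 1 : ℕ) : ZMod (2*(K+2))) = ((2 * t.val + 2 : ℕ) : ZMod (2*(K+2))) + 1
    rw [fin_add_one (by omega)]
    rw [show ((2 * ((t.val + 1) % (K+2)) + 1 : ℕ) : ZMod (2*(K+2))) = ((2 * (t.val+1) + 1 : ℕ) : ZMod (2*(K+2))) from tor_cast_mod' _ _]
    push_cast; ring
  have hadj3 : ∀ i j, HX (cc i) (vv j) ≠ 0 → j = i ∨ j = i + 1 := by
    intro i j h0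
    rw [hX] at h0
    rcases h0 with ⟨e1, _⟩ | ⟨e1, _⟩ | ⟨_, e2⟩ | ⟨_, e2⟩
    · -- J = J + 1 : parity contradiction
      exfalso
      have e1' : ((2*k.val+1 : ℕ) : ZMod (2*(K+2))) = ((2*k.val+2 : ℕ) : ZMod (2*(K+2))) := by
        have e0 : ((2*k.val+1 : ℕ) : ZMod (2*(K+2))) = ((2*k.val+1 : ℕ) : ZMod (2*(K+2))) + 1 := e1
        push_cast at e0 ⊢
        linear_combination e0
      have p1 := tor_cast_parity (n := K+2) (2*k.val+1)
      have p2 := tor_cast_parity (n := K+2) (2*k.val+2)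
      rw [e1'] at p1
      omega
    · exfalso
      have e1' : ((2*k.val+1 : ℕ) : ZMod (2*(K+2))) = ((2*k.val : ℕ) : ZMod (2*(K+2))) := by
        have e0 : ((2*k.val+1 : ℕ) : ZMod (2*(K+2))) = ((2*k.val+1 : ℕ) : ZMod (2*(K+2))) - 1 := e1
        push_cast at e0 ⊢
        linear_combination e0
      have p1 := tor_cast_parity (n := K+2) (2*k.val+1)
      have p2 := tor_cast_parity (n := K+2) (2*k.val)
      rw [e1'] at p1
      omega
    · -- v.2 = c.2 + 1 : j = i + 1
      right
      have e2' : ((2 * j.val + 1 : ℕ) : ZMod (2*(K+2))) = ((2 * (i.val + 1) + 1 : ℕ) : ZMod (2*(K+2))) := by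
        have e2 : ((2 * j.val + 1 : ℕ) : ZMod (2*(K+2))) = ((2 * i.val + 2 : ℕ) : ZMod (2*(K+2))) + 1 := e2
        push_cast at e2 ⊢; linear_combination e2
      rw [← tor_cast_mod' (n := K+2) (i.val+1) 1] at e2'
      have := tor_cast_inj (by have := j.isLt; omega)
        (by have := Nat.mod_lt (i.val+1) (show 0 < K+2 by omega); omega) e2'
      apply Fin.ext
      rw [fin_add_one (by omega)]
      omega
    · -- v.2 = c.2 - 1 : j = i
      left
      have e2' : ((2 * j.val + 1 : ℕ) : ZMod (2*(K+2))) = ((2 * i.val + 1 : ℕ) : ZMod (2*(K+2))) := by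
        have e2 : ((2 * j.val + 1 : ℕ) : ZMod (2*(K+2))) = ((2 * i.val + 2 : ℕ) : ZMod (2*(K+2))) - 1 := e2
        push_cast at e2 ⊢; linear_combination e2
      have := tor_cast_inj (by have := j.isLt; omega) (by have := i.isLt; omega) e2'
      exact Fin.ext (by omega)
  have hother : ∀ d j, HX d (vv j) ≠ 0 → ∃ i, d = cc i := by
    intro d j h0
    rw [hX] at h0
    obtain ⟨hd1, hd2⟩ := d.2
    rcases h0 with ⟨e1, e2⟩ | ⟨e1, e2⟩ | ⟨e1, e2⟩ | ⟨e1, e2⟩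
    · -- J = d.1.1 + 1 : d.1.1 = ↑(2k) even, contradiction with hd1
      exfalso
      have h4 : d.1.1 = ((2*k.val : ℕ) : ZMod (2*(K+2))) := by
        have e1' : ((2*k.val+1 : ℕ) : ZMod (2*(K+2))) = d.1.1 + 1 := e1
        push_cast at e1' ⊢
        linear_combination -e1'
      rw [h4] at hd1
      rw [tor_cast_parity] at hd1
      omega
    · -- J = d.1.1 - 1 : d.1.1 = ↑(2k+2) even, contradiction
      exfalso
      have h4 : d.1.1 = ((2*k.val+2 : ℕ) : ZMod (2*(K+2))) := by
        have e1' : ((2*k.val+1 : ℕ) : ZMod (2*(K+2))) = d.1.1 - 1 := e1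
        push_cast at e1' ⊢
        linear_combination -e1'
      rw [h4] at hd1
      rw [tor_cast_parity] at hd1
      omega
    · -- ↑(2j+1) = d.1.2 + 1 : d = cc (j-1)
      refine ⟨j - 1, ?_⟩
      have key : ((2 * (j-1).val + 2 : ℕ) : ZMod (2*(K+2))) + 1 = ((2 * j.val + 1 : ℕ) : ZMod (2*(K+2))) := by
        rcases fin_sub_one (by omega) j with h | ⟨h1, h0'⟩
        · rw [← h]; push_cast; ring
        · rw [h1, h0']
          have e3 : (2*(K+2-1)+2) = 2*(K+2) := by omega
          calc ((2*(K+2-1)+2 : ℕ) : ZMod (2*(K+2))) + 1 = ((2*(K+2) : ℕ) : ZMod (2*(K+2))) + 1 := by rw [e3]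
            _ = 0 + 1 := by rw [ZMod.natCast_self]
            _ = ((2*(0:ℕ)+1 : ℕ) : ZMod (2*(K+2))) := by norm_num
      apply Subtype.ext
      apply Prod.ext
      · exact e1.symm
      · show d.1.2 = ((2 * (j-1).val + 2 : ℕ) : ZMod (2*(K+2)))
        have h4 : d.1.2 + 1 = ((2 * (j-1).val + 2 : ℕ) : ZMod (2*(K+2))) + 1 := by
          rw [key, ← e2]
        exact add_right_cancel h4
    · -- ↑(2j+1) = d.1.2 - 1 : d = cc j
      refine ⟨j, ?_⟩
      apply Subtype.ext
      apply Prod.ext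
      · exact e1.symm
      · show d.1.2 = ((2 * j.val + 2 : ℕ) : ZMod (2*(K+2)))
        have e2' : ((2 * j.val + 1 : ℕ) : ZMod (2*(K+2))) = d.1.2 - 1 := e2
        push_cast at e2' ⊢
        linear_combination -e2'
  obtain ⟨Z, hZ0, hZne, hZsupp⟩ :=
    exists_cycle_codeword HX h2 hcycX K vv cc hv hc hadj1 hadj2 hadj3 hother
  refine ⟨Z, hZ0, fun x => ⟨fun hx => ?_, fun hx => ?_⟩⟩
  · obtain ⟨i, rfl⟩ := hZsupp x hx
    rfl
  · have hJv : x.1.1.val % 2 = 1 := by rw [hx]; exact hJpar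
    have hpar1 : x.1.2.val % 2 = 1 := by have := x.2; omega
    have hlt := ZMod.val_lt x.1.2
    have hx1 : x = vv ⟨(x.1.2.val - 1) / 2, by omega⟩ := by
      apply Subtype.ext
      apply Prod.ext
      · exact hx
      · show x.1.2 = ((2 * ((x.1.2.val - 1) / 2) + 1 : ℕ) : ZMod (2*(K+2)))
        rw [show 2 * ((x.1.2.val - 1)/2) + 1 = x.1.2.val from by omega]
        exact (tor_cast_val_self _).symm
    rw [hx1]
    exact hZne _

lemma card_lower {α : Type*} [Finite α] (S : Set α) (n : ℕ) (f : Fin n → α)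
    (hf : Function.Injective f) (hfS : ∀ k, f k ∈ S) : n ≤ S.ncard := by
  have h1 : Nat.card (Fin n) ≤ Nat.card S :=
    Nat.card_le_card_of_injective (fun k => (⟨f k, hfS k⟩ : S))
      (fun k1 k2 h => hf (congrArg Subtype.val h))
  rwa [Nat.card_eq_fintype_card, Fintype.card_fin, Nat.card_coe_set_eq] at h1


/-- **Weight lower bound for nontrivial coset elements.**
In the `q`-ary toric code (`n ≥ 2`, cycle products equal to `1` in both Tanner
graphs), let `X̄₁, X̄₂ ∈ C_Z^{(q)} = ker H_Z^{(q)}` be the big-cycle codewords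
(supported exactly on a vertical big cycle — column `a`, `a` even — and on a
horizontal big cycle — row `b`, `b` odd — respectively, nonzero on their supports).
Let `E = α₁ X̄₁ + α₂ X̄₂ + E_s` with `E_s ∈ (C_X^{(q)})^⊥` and `α₁, α₂` not both
zero.  Then the Hamming weight of `E` is at least `n`. -/
theorem coset_weight_lower_bound (n m : ℕ) [NeZero (2*n)] (hn : 2 ≤ n) (hm : 0 < m)
    (HX : Matrix (TorusCX n) (TorusV n) (GaloisField 2 m))
    (HZ : Matrix (TorusCZ n) (TorusV n) (GaloisField 2 m))
    (hX : ∀ c v, HX c v ≠ 0 ↔ torusAdj c.1 v.1)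
    (hZ : ∀ c v, HZ c v ≠ 0 ↔ torusAdj c.1 v.1)
    (horth : HX * HZᵀ = 0)
    (hcycX : CycleProdOne HX) (hcycZ : CycleProdOne HZ)
    (a b : ZMod (2*n)) (ha : a.val % 2 = 0) (hb : b.val % 2 = 1)
    (X1 X2 : TorusV n → GaloisField 2 m)
    (hX1mem : X1 ∈ LinearMap.ker HZ.mulVecLin)
    (hX1supp : ∀ v : TorusV n, X1 v ≠ 0 ↔ v.1.1 = a)
    (hX2mem : X2 ∈ LinearMap.ker HZ.mulVecLin)
    (hX2supp : ∀ v : TorusV n, X2 v ≠ 0 ↔ v.1.2 = b)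
    (Es : TorusV n → GaloisField 2 m)
    (hEs : Es ∈ dualCode (LinearMap.ker HX.mulVecLin))
    (α1 α2 : GaloisField 2 m) (hα : ¬(α1 = 0 ∧ α2 = 0)) :
    n ≤ Set.ncard {v | (α1 • X1 + α2 • X2 + Es) v ≠ 0} := by
  classical
  have h2 : ∀ x : GaloisField 2 m, x + x = 0 := by
    intro x
    have hc2 : (2 : GaloisField 2 m) = 0 := by
      have := CharP.cast_eq_zero (GaloisField 2 m) 2
      exact_mod_cast this
    linear_combination x * hc2
  set E : TorusV n → GaloisField 2 m := α1 • X1 + α2 • X2 + Es with hE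
  have hEx : ∀ x, E x = α1 * X1 x + α2 * X2 x + Es x := by
    intro x; simp [hE, Pi.add_apply, Pi.smul_apply, smul_eq_mul]
  have hES : ∀ Z : TorusV n → GaloisField 2 m, HX.mulVec Z = 0 → ∑ x, Z x * Es x = 0 :=
    fun Z hZ0 => hEs Z (by rwa [LinearMap.mem_ker, Matrix.mulVecLin_apply])
  have hsplit : ∀ Z : TorusV n → GaloisField 2 m,
      ∑ x, Z x * E x = (∑ x, Z x * (α1 * X1 x)) + (∑ x, Z x * (α2 * X2 x)) + ∑ x, Z x * Es x := by
    intro Z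
    rw [← Finset.sum_add_distrib, ← Finset.sum_add_distrib]
    apply Finset.sum_congr rfl
    intro x _
    rw [hEx]; ring
  rcases eq_or_ne α1 0 with h10 | h1ne
  · -- column case, α2 ≠ 0
    have h2ne : α2 ≠ 0 := fun h => hα ⟨h10, h⟩
    have key : ∀ k : Fin n, ∃ w : TorusV n, E w ≠ 0 ∧ w.1.1 = ((2*k.val+1 : ℕ) : ZMod (2*n)) := by
      intro k
      obtain ⟨Z, hZ0, hZsupp⟩ := col_codeword hn HX hX hcycX h2 k
      have hIpar : (((2*k.val+1 : ℕ) : ZMod (2*n))).val % 2 = 1 := by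
        rw [tor_cast_parity]; omega
      set P : TorusV n := ⟨((((2*k.val+1 : ℕ) : ZMod (2*n))), b), by simp only; omega⟩ with hP
      have hZP : Z P ≠ 0 := (hZsupp P).mpr rfl
      have hX2P : X2 P ≠ 0 := (hX2supp P).mpr rfl
      have hsum3 : ∑ x, Z x * Es x = 0 := hES Z hZ0
      have hsum1 : ∀ x, Z x * (α1 * X1 x) = 0 := fun x => by rw [h10]; ring
      have hsum2 : ∑ x, Z x * (α2 * X2 x) = α2 * (Z P * X2 P) := by
        have hms : ∑ x, Z x * (α2 * X2 x) = α2 * ∑ x, Z x * X2 x := by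
          rw [Finset.mul_sum]
          exact Finset.sum_congr rfl fun x _ => by ring
        rw [hms]
        congr 1
        apply Finset.sum_eq_single P
        · intro x _ hxP
          by_cases hzx : Z x = 0
          · rw [hzx]; ring
          by_cases hx2 : X2 x = 0
          · rw [hx2]; ring
          exact absurd (Subtype.ext (Prod.ext ((hZsupp x).mp hzx) ((hX2supp x).mp hx2))) hxP
        · intro h; exact absurd (Finset.mem_univ P) h
      have hStot : ∑ x, Z x * E x = α2 * (Z P * X2 P) := by
        rw [hsplit, hsum3, hsum2, Finset.sum_eq_zero (fun x _ => hsum1 x)]; ring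
      have hne0 : ∑ x, Z x * E x ≠ 0 := by
        rw [hStot]; exact mul_ne_zero h2ne (mul_ne_zero hZP hX2P)
      have hex : ∃ x, Z x * E x ≠ 0 := by
        by_contra hz; push_neg at hz
        exact hne0 (Finset.sum_eq_zero fun x _ => hz x)
      obtain ⟨x, hx⟩ := hex
      have hzx : Z x ≠ 0 := fun h => hx (by rw [h]; ring)
      have hexx : E x ≠ 0 := fun h => hx (by rw [h]; ring)
      exact ⟨x, hexx, (hZsupp x).mp hzx⟩
    choose f hf1 hf2 using key
    refine card_lower _ n f ?_ (fun k => hf1 k)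
    intro k1 k2 hke
    have he : ((2*k1.val+1 : ℕ) : ZMod (2*n)) = ((2*k2.val+1 : ℕ) : ZMod (2*n)) := by
      rw [← hf2 k1, ← hf2 k2, hke]
    have hb1 : 2*k1.val+1 < 2*n := by have := k1.isLt; omega
    have hb2 : 2*k2.val+1 < 2*n := by have := k2.isLt; omega
    have := tor_cast_inj (n := n) hb1 hb2 he
    exact Fin.ext (by omega)
  · -- row case, α1 ≠ 0
    have key : ∀ k : Fin n, ∃ w : TorusV n, E w ≠ 0 ∧ w.1.2 = ((2*k.val : ℕ) : ZMod (2*n)) := by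
      intro k
      obtain ⟨Z, hZ0, hZsupp⟩ := row_codeword hn HX hX hcycX h2 k
      have hIpar : (((2*k.val : ℕ) : ZMod (2*n))).val % 2 = 0 := by
        rw [tor_cast_parity]; omega
      set P : TorusV n := ⟨(a, (((2*k.val : ℕ) : ZMod (2*n)))), by simp only; omega⟩ with hP
      have hZP : Z P ≠ 0 := (hZsupp P).mpr rfl
      have hX1P : X1 P ≠ 0 := (hX1supp P).mpr rfl
      have hsum3 : ∑ x, Z x * Es x = 0 := hES Z hZ0
      have hsum2 : ∀ x, Z x * (α2 * X2 x) = 0 := by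
        intro x
        by_cases hzx : Z x = 0
        · rw [hzx]; ring
        by_cases hx2 : X2 x = 0
        · rw [hx2]; ring
        exfalso
        have hxb : x.1.2 = b := (hX2supp x).mp hx2
        have hxk : x.1.2 = ((2*k.val : ℕ) : ZMod (2*n)) := (hZsupp x).mp hzx
        have : b.val % 2 = 0 := by rw [← hxb, hxk]; exact hIpar
        omega
      have hsum1 : ∑ x, Z x * (α1 * X1 x) = α1 * (Z P * X1 P) := by
        have hms : ∑ x, Z x * (α1 * X1 x) = α1 * ∑ x, Z x * X1 x := by
          rw [Finset.mul_sum]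
          exact Finset.sum_congr rfl fun x _ => by ring
        rw [hms]
        congr 1
        apply Finset.sum_eq_single P
        · intro x _ hxP
          by_cases hzx : Z x = 0
          · rw [hzx]; ring
          by_cases hx1 : X1 x = 0
          · rw [hx1]; ring
          exact absurd (Subtype.ext (Prod.ext ((hX1supp x).mp hx1) ((hZsupp x).mp hzx))) hxP
        · intro h; exact absurd (Finset.mem_univ P) h
      have hStot : ∑ x, Z x * E x = α1 * (Z P * X1 P) := by
        rw [hsplit, hsum3, hsum1, Finset.sum_eq_zero (fun x _ => hsum2 x)]; ring
      have hne0 : ∑ x, Z x * E x ≠ 0 := by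
        rw [hStot]; exact mul_ne_zero h1ne (mul_ne_zero hZP hX1P)
      have hex : ∃ x, Z x * E x ≠ 0 := by
        by_contra hz; push_neg at hz
        exact hne0 (Finset.sum_eq_zero fun x _ => hz x)
      obtain ⟨x, hx⟩ := hex
      have hzx : Z x ≠ 0 := fun h => hx (by rw [h]; ring)
      have hexx : E x ≠ 0 := fun h => hx (by rw [h]; ring)
      exact ⟨x, hexx, (hZsupp x).mp hzx⟩
    choose f hf1 hf2 using key
    refine card_lower _ n f ?_ (fun k => hf1 k)
    intro k1 k2 hke
    have he : ((2*k1.val : ℕ) : ZMod (2*n)) = ((2*k2.val : ℕ) : ZMod (2*n)) := by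
      rw [← hf2 k1, ← hf2 k2, hke]
    have hb1 : 2*k1.val < 2*n := by have := k1.isLt; omega
    have hb2 : 2*k2.val < 2*n := by have := k2.isLt; omega
    have := tor_cast_inj (n := n) hb1 hb2 he
    exact Fin.ext (by omega)
end
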